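/- arXiv:2310.10946 — 4 statements merged into one kernel-verified Lean document; each statement's English description precedes it below -/
import Mathlib

section
/- Let X ⊆ ℝ^d be a nonempty compact convex set with ‖x − y‖₂ ≤ D for all x, y ∈ X, let F > 0, d ≥ 1, c ∈ [1/2, 1), ε > 0, and let T be a positive integer. For each t = 1, …, T let h_t : ℝ^d → ℝ be convex, differentiable, and Lipschitz continuous with constant 3Fd on X, let g : ℝ^d → ℝ be convex on X, and suppose x* ∈ X satisfies g(x*) ≤ 0. Let x_1 ∈ X, and for each t let λ_t ≥ t^c, γ_t := t^{c+ε}, α_t := t^c, and let x_{t+1} be the minimizer over X of x ↦ h_t(x_t) + ⟨∇h_t(x_t), x − x_t⟩ + λ_t γ_t·max{g(x), 0} + (α_t/2)‖x − x_t‖₂². Then ∑_{t=1}^{T} max{g(x_{t+1}), 0} ≤ 27F²d²/4 + 3FdD(1+ε)/ε + D². -/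
/-! The update minimizes a convex function plus `t^c/2 ‖z - x_t‖²`, so comparing its value at
`x_{t+1}` with its value at the feasible point `x*` (three-point inequality) gives
`λ_t γ_t [g(x_{t+1})]₊ ≤ ⟪∇h_t(x_t), x* - x_{t+1}⟫ + t^c/2 (‖x* - x_t‖² - ‖x* - x_{t+1}‖²)`.
The inner product is at most `3FdD` by the Lipschitz bound. Dividing by
`λ_t γ_t ≥ t^{2c+ε} ≥ t^{1+ε}` leaves a summable term `3FdD t^{-(1+ε)}`, whose sum is at most
`3FdD(1+ε)/ε`, and a telescoping term with decreasing weights `1/(2t^{c+ε})`, whose sum is at most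
`D²/2`; so the `27F²d²/4` term of the bound is not even needed. -/

open RealInnerProductSpace Filter Topology

/-- `X` may have empty interior, so this is weaker than a bound on `‖fderiv ℝ f w‖`. -/
theorem fderiv_apply_sub_le_of_lipschitz {E : Type*} [NormedAddCommGroup E] [NormedSpace ℝ E]
    {X : Set E} (hX : Convex ℝ X) {f : E → ℝ} {K : ℝ}
    {w y z : E} (hw : w ∈ X) (hy : y ∈ X) (hz : z ∈ X) (hf : DifferentiableAt ℝ f w)
    (hlip : ∀ p ∈ X, ∀ q ∈ X, |f p - f q| ≤ K * ‖p - q‖) :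
    fderiv ℝ f w (y - z) ≤ K * ‖y - z‖ := by
  set φ : ℝ → ℝ := fun s => f (w + s • (y - w)) - f (w + s • (z - w))
  have hline : ∀ v : E, HasDerivAt (fun s : ℝ => f (w + s • v)) (fderiv ℝ f w v) 0 := fun v => by
    have hfw : HasFDerivAt f (fderiv ℝ f w) (w + (0 : ℝ) • v) := by simpa using hf.hasFDerivAt
    have hcurve : HasDerivAt (fun s : ℝ => w + s • v) v 0 := by
      simpa using ((hasDerivAt_id (0 : ℝ)).smul_const v).const_add w
    exact hfw.comp_hasDerivAt 0 hcurve
  have hφ : HasDerivAt φ (fderiv ℝ f w (y - z)) 0 := by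
    have h := (hline (y - w)).sub (hline (z - w))
    rwa [← map_sub, sub_sub_sub_cancel_right] at h
  refine le_of_tendsto hφ.tendsto_slope_zero_right ?_
  filter_upwards [Ioc_mem_nhdsGT zero_lt_one] with s ⟨hs0, hs1⟩
  have hmem : ∀ {v}, v ∈ X → w + s • (v - w) ∈ X := fun hv =>
    hX.add_smul_sub_mem hw hv ⟨hs0.le, hs1⟩
  have hφs : φ s ≤ K * ‖y - z‖ * s := calc
    φ s ≤ |φ s| := le_abs_self _
    _ ≤ K * ‖(w + s • (y - w)) - (w + s • (z - w))‖ := hlip _ (hmem hy) _ (hmem hz)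
    _ = K * ‖y - z‖ * s := by
      rw [add_sub_add_left_eq_sub, ← smul_sub, sub_sub_sub_cancel_right, norm_smul,
        Real.norm_of_nonneg hs0.le]
      ring
  rw [zero_add, show φ 0 = 0 by simp [φ], sub_zero, smul_eq_mul, inv_mul_le_iff₀ hs0]
  linarith

variable {E : Type*} [NormedAddCommGroup E] [InnerProductSpace ℝ E]

theorem ConvexOn.three_point_of_isMinOn_add_sq_norm_sub {X : Set E} {ψ : E → ℝ}
    (hψ : ConvexOn ℝ X ψ) {w u y : E} {μ : ℝ} (hu : u ∈ X) (hy : y ∈ X)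
    (hmin : IsMinOn (fun z => ψ z + μ / 2 * ‖z - w‖ ^ 2) X u) :
    ψ u + μ / 2 * ‖u - w‖ ^ 2 + μ / 2 * ‖y - u‖ ^ 2 ≤ ψ y + μ / 2 * ‖y - w‖ ^ 2 := by
  have hvar : ∀ θ ∈ Set.Ioc (0 : ℝ) 1,
      ψ u ≤ ψ y + μ * ⟪u - w, y - u⟫ + θ * (μ / 2 * ‖y - u‖ ^ 2) := by
    rintro θ ⟨hθ0, hθ1⟩
    have hopt := isMinOn_iff.mp hmin _ (hψ.1.add_smul_sub_mem hu hy ⟨hθ0.le, hθ1⟩)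
    have hcvx : ψ (u + θ • (y - u)) ≤ (1 - θ) * ψ u + θ * ψ y := by
      have hcomb : u + θ • (y - u) = (1 - θ) • u + θ • y := by module
      simpa only [hcomb, smul_eq_mul] using hψ.2 hu hy (sub_nonneg.2 hθ1) hθ0.le (by ring)
    have hnorm : ‖u + θ • (y - u) - w‖ ^ 2
        = ‖u - w‖ ^ 2 + 2 * θ * ⟪u - w, y - u⟫ + θ ^ 2 * ‖y - u‖ ^ 2 := by
      rw [add_sub_right_comm, norm_add_sq_real, inner_smul_right, norm_smul, mul_pow,
        Real.norm_of_nonneg hθ0.le]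
      ring
    rw [hnorm] at hopt
    refine le_of_mul_le_mul_left ?_ hθ0
    linarith
  have hlim : ψ u ≤ ψ y + μ * ⟪u - w, y - u⟫ := by
    refine ge_of_tendsto (f := fun θ => ψ y + μ * ⟪u - w, y - u⟫ + θ * (μ / 2 * ‖y - u‖ ^ 2))
      ?_ ?_ (x := 𝓝[>] 0)
    · exact ((by fun_prop : Continuous _).tendsto' 0 _ (by simp)).mono_left nhdsWithin_le_nhds
    · filter_upwards [Ioc_mem_nhdsGT zero_lt_one] using hvar
  have hexp : ‖y - w‖ ^ 2 = ‖y - u‖ ^ 2 + 2 * ⟪u - w, y - u⟫ + ‖u - w‖ ^ 2 := by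
    rw [← sub_add_sub_cancel y u w, norm_add_sq_real, real_inner_comm]
  rw [hexp]
  linarith

theorem penalty_le_of_isMinOn_prox {X : Set E} {g : E → ℝ} (hg : ConvexOn ℝ X g)
    {xs u w G : E} {a Λ μ : ℝ} (hxs : xs ∈ X) (hgxs : g xs ≤ 0) (hu : u ∈ X)
    (hΛ : 0 ≤ Λ) (hμ : 0 ≤ μ)
    (hmin : IsMinOn (fun z => a + ⟪G, z - w⟫ + Λ * max (g z) 0 + μ / 2 * ‖z - w‖ ^ 2) X u) :
    Λ * max (g u) 0 ≤ ⟪G, xs - u⟫ + μ / 2 * (‖xs - w‖ ^ 2 - ‖xs - u‖ ^ 2) := by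
  have haff : ConvexOn ℝ X (fun z => a + ⟪G, z - w⟫) := by
    refine (((innerₛₗ ℝ G).convexOn hg.1).add_const (a - ⟪G, w⟫)).congr fun z _ => ?_
    simp only [Pi.add_apply, innerₛₗ_apply_apply, inner_sub_right]
    ring
  have hψ : ConvexOn ℝ X (fun z => a + ⟪G, z - w⟫ + Λ * max (g z) 0) :=
    haff.add ((hg.sup (convexOn_const 0 hg.1)).smul hΛ)
  have h3 := hψ.three_point_of_isMinOn_add_sq_norm_sub hu hxs hmin
  have hinner : ⟪G, xs - w⟫ - ⟪G, u - w⟫ = ⟪G, xs - u⟫ := by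
    rw [← inner_sub_right, sub_sub_sub_cancel_right]
  rw [max_eq_right hgxs] at h3
  nlinarith [mul_nonneg hμ (sq_nonneg ‖u - w‖)]

variable [CompleteSpace E]

theorem max_zero_le_of_isMinOn_linearized_step {X : Set E} (hX : Convex ℝ X) {f g : E → ℝ}
    (hg : ConvexOn ℝ X g) {xs w u : E} {L D Λ t c ε : ℝ} (hxs : xs ∈ X) (hgxs : g xs ≤ 0)
    (hw : w ∈ X) (hu : u ∈ X) (hf : DifferentiableAt ℝ f w)
    (hlip : ∀ p ∈ X, ∀ q ∈ X, |f p - f q| ≤ L * ‖p - q‖) (hL : 0 ≤ L) (hdist : ‖xs - u‖ ≤ D)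
    (ht : 1 ≤ t) (hc : 1 / 2 ≤ c) (hΛ : t ^ c * t ^ (c + ε) ≤ Λ)
    (hmin : IsMinOn (fun z => f w + ⟪gradient f w, z - w⟫ + Λ * max (g z) 0
      + t ^ c / 2 * ‖z - w‖ ^ 2) X u) :
    max (g u) 0 ≤
      L * D * t ^ (-(1 + ε)) + (t ^ (c + ε))⁻¹ / 2 * (‖xs - w‖ ^ 2 - ‖xs - u‖ ^ 2) := by
  have ht0 : 0 < t := by linarith
  set P := t ^ c * t ^ (c + ε) with hPdef
  have hP : 0 < P := by positivity
  have hpen := penalty_le_of_isMinOn_prox hg hxs hgxs hu (hP.le.trans hΛ) (by positivity) hmin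
  have hgrad : ⟪gradient f w, xs - u⟫ ≤ L * D := by
    rw [gradient, InnerProductSpace.toDual_symm_apply]
    exact (fderiv_apply_sub_le_of_lipschitz hX hw hxs hu hf hlip).trans
      (mul_le_mul_of_nonneg_left hdist hL)
  have hPinv : P⁻¹ ≤ t ^ (-(1 + ε)) := by
    rw [hPdef, ← Real.rpow_add ht0, ← Real.rpow_neg ht0.le]
    exact Real.rpow_le_rpow_of_exponent_le ht (by linarith)
  have hLD : 0 ≤ L * D := mul_nonneg hL ((norm_nonneg _).trans hdist)
  calc max (g u) 0 = P⁻¹ * (P * max (g u) 0) := by field_simp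
    _ ≤ P⁻¹ * (L * D + t ^ c / 2 * (‖xs - w‖ ^ 2 - ‖xs - u‖ ^ 2)) := by
        gcongr
        linarith [mul_le_mul_of_nonneg_right hΛ (le_max_right (g u) 0)]
    _ = P⁻¹ * (L * D) + (t ^ (c + ε))⁻¹ / 2 * (‖xs - w‖ ^ 2 - ‖xs - u‖ ^ 2) := by
        rw [hPdef]
        field_simp
    _ ≤ L * D * t ^ (-(1 + ε)) + (t ^ (c + ε))⁻¹ / 2 * (‖xs - w‖ ^ 2 - ‖xs - u‖ ^ 2) := by
        rw [mul_comm (P⁻¹)]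
        gcongr

theorem rpow_neg_one_add_le_sub_div {ε n : ℝ} (hε : 0 < ε) (hn : 0 < n) :
    (n + 1) ^ (-(1 + ε)) ≤ (n ^ (-ε) - (n + 1) ^ (-ε)) / ε := by
  have hne : ∀ y ∈ Set.Icc n (n + 1), y ≠ 0 := fun y hy => (hn.trans_le hy.1).ne'
  obtain ⟨ξ, ⟨hnξ, hξn⟩, hslope⟩ := exists_hasDerivAt_eq_slope (fun y : ℝ => y ^ (-ε))
    (fun y => -ε * y ^ (-ε - 1)) (lt_add_one n)
    (fun y hy => (Real.continuousAt_rpow_const y (-ε) (Or.inl (hne y hy))).continuousWithinAt)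
    (fun y hy => Real.hasDerivAt_rpow_const (Or.inl (hne y (Set.Ioo_subset_Icc_self hy))))
  rw [add_sub_cancel_left, div_one] at hslope
  have hmono : (n + 1) ^ (-(1 + ε)) ≤ ξ ^ (-ε - 1) := by
    rw [show -ε - 1 = -(1 + ε) by ring]
    exact Real.rpow_le_rpow_of_nonpos (hn.trans hnξ) hξn.le (by linarith)
  rw [le_div_iff₀ hε]
  linarith [mul_le_mul_of_nonneg_right hmono hε.le]

theorem sum_Icc_rpow_neg_one_add_le {ε : ℝ} (hε : 0 < ε) (T : ℕ) :
    ∑ t ∈ Finset.Icc 1 T, (t : ℝ) ^ (-(1 + ε)) ≤ (1 + ε) / ε := by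
  suffices h : ∀ T : ℕ, 1 ≤ T →
      ∑ t ∈ Finset.Icc 1 T, (t : ℝ) ^ (-(1 + ε)) ≤ (1 + ε - (T : ℝ) ^ (-ε)) / ε by
    rcases T.eq_zero_or_pos with rfl | hT
    · simp only [zero_lt_one, Finset.Icc_eq_empty_of_lt, Finset.sum_empty]
      positivity
    · refine (h T hT).trans ?_
      gcongr
      linarith [Real.rpow_nonneg (Nat.cast_nonneg T) (-ε)]
  intro T hT
  induction T, hT using Nat.le_induction with
  | base =>
    simp only [Finset.Icc_self, Finset.sum_singleton, Nat.cast_one, Real.one_rpow]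
    rw [add_sub_cancel_left, div_self hε.ne']
  | succ n hn ih =>
    rw [Finset.sum_Icc_succ_top (by omega)]
    have hstep := rpow_neg_one_add_le_sub_div hε (n := n) (by positivity)
    push_cast
    have hsplit : (1 + ε - ((n : ℝ) + 1) ^ (-ε)) / ε
        = (1 + ε - (n : ℝ) ^ (-ε)) / ε + ((n : ℝ) ^ (-ε) - ((n : ℝ) + 1) ^ (-ε)) / ε := by ring
    linarith

theorem sum_Icc_mul_sub_succ_le {R : Type*} [CommRing R] [LinearOrder R] [IsStrictOrderedRing R]
    {β A : ℕ → R} (hβ : AntitoneOn β (Set.Ici 1)) (hA : ∀ t, 0 ≤ A t) (T : ℕ) :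
    ∑ t ∈ Finset.Icc 1 T, β t * (A t - A (t + 1)) ≤ β 1 * A 1 - β (T + 1) * A (T + 1) := by
  induction T with
  | zero => simp
  | succ n ih =>
    rw [Finset.sum_Icc_succ_top (by omega)]
    have hβn : β (n + 2) ≤ β (n + 1) :=
      hβ (Set.mem_Ici.mpr (by omega)) (Set.mem_Ici.mpr (by omega)) (by omega)
    have := mul_le_mul_of_nonneg_right hβn (hA (n + 2))
    linarith

theorem sum_Icc_le_of_le_rpow_add_mul_sub {a A : ℕ → ℝ} {B q ε : ℝ} (hε : 0 < ε) (hq : 0 ≤ q)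
    (hB : 0 ≤ B) (hA : ∀ t, 0 ≤ A t) (T : ℕ)
    (ha : ∀ t ∈ Finset.Icc 1 T,
      a t ≤ B * (t : ℝ) ^ (-(1 + ε)) + ((t : ℝ) ^ q)⁻¹ / 2 * (A t - A (t + 1))) :
    ∑ t ∈ Finset.Icc 1 T, a t ≤ B * (1 + ε) / ε + A 1 / 2 := by
  set β : ℕ → ℝ := fun t => ((t : ℝ) ^ q)⁻¹ / 2
  have hβ : AntitoneOn β (Set.Ici 1) := by
    intro s hs t _ hst
    have hs1 : (1 : ℝ) ≤ s := by exact_mod_cast hs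
    simp only [β]
    gcongr
  have hβ1 : β 1 = 1 / 2 := by simp [β]
  have hlast : 0 ≤ β (T + 1) * A (T + 1) := mul_nonneg (by positivity) (hA _)
  calc ∑ t ∈ Finset.Icc 1 T, a t
      ≤ ∑ t ∈ Finset.Icc 1 T, (B * (t : ℝ) ^ (-(1 + ε)) + β t * (A t - A (t + 1))) :=
        Finset.sum_le_sum ha
    _ = B * ∑ t ∈ Finset.Icc 1 T, (t : ℝ) ^ (-(1 + ε))
          + ∑ t ∈ Finset.Icc 1 T, β t * (A t - A (t + 1)) := by
        rw [Finset.sum_add_distrib, Finset.mul_sum]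
    _ ≤ B * ((1 + ε) / ε) + (β 1 * A 1 - β (T + 1) * A (T + 1)) :=
        add_le_add (mul_le_mul_of_nonneg_left (sum_Icc_rpow_neg_one_add_le hε T) hB)
          (sum_Icc_mul_sub_succ_le hβ hA T)
    _ ≤ B * (1 + ε) / ε + A 1 / 2 := by
        rw [hβ1, mul_div_assoc]
        linarith

theorem violation_bound_convex_fixed_general
    {d : ℕ}
    (X : Set (EuclideanSpace ℝ (Fin d)))
    (hX : Convex ℝ X)
    (D : ℝ) (hD : ∀ x ∈ X, ∀ y ∈ X, ‖x - y‖ ≤ D)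
    (F : ℝ) (hF : 0 < F)
    (c ε : ℝ) (hc₁ : 1 / 2 ≤ c) (hε : 0 < ε)
    (T : ℕ)
    (h : ℕ → EuclideanSpace ℝ (Fin d) → ℝ)
    (hdiff : ∀ t ∈ Finset.Icc 1 T, ∀ x ∈ X, DifferentiableAt ℝ (h t) x)
    (hlip : ∀ t ∈ Finset.Icc 1 T, ∀ x ∈ X, ∀ y ∈ X,
      |h t x - h t y| ≤ 3 * F * (d : ℝ) * ‖x - y‖)
    (g : EuclideanSpace ℝ (Fin d) → ℝ) (hg : ConvexOn ℝ X g)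
    (xs : EuclideanSpace ℝ (Fin d)) (hxs : xs ∈ X) (hgxs : g xs ≤ 0)
    (x : ℕ → EuclideanSpace ℝ (Fin d)) (hx1 : x 1 ∈ X)
    (lam γ : ℕ → ℝ)
    (hlam : ∀ t ∈ Finset.Icc 1 T, (t : ℝ) ^ c ≤ lam t)
    (hγ : ∀ t ∈ Finset.Icc 1 T, γ t = (t : ℝ) ^ (c + ε))
    (hupd : ∀ t ∈ Finset.Icc 1 T, x (t + 1) ∈ X ∧
      IsMinOn (fun z => h t (x t) + ⟪gradient (h t) (x t), z - x t⟫
        + lam t * γ t * max (g z) 0 + (t : ℝ) ^ c / 2 * ‖z - x t‖ ^ 2) X (x (t + 1))) :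
    (∑ t ∈ Finset.Icc 1 T, max (g (x (t + 1))) 0) ≤
      27 * F ^ 2 * (d : ℝ) ^ 2 / 4 + 3 * F * (d : ℝ) * D * (1 + ε) / ε + D ^ 2 := by
  have hL : 0 ≤ 3 * F * (d : ℝ) := by positivity
  have hLD : 0 ≤ 3 * F * (d : ℝ) * D := mul_nonneg hL (by simpa using hD xs hxs xs hxs)
  have hmem : ∀ t ∈ Finset.Icc 1 T, x t ∈ X := by
    rintro (_ | _ | n) ht
    · simp at ht
    · exact hx1
    · exact (hupd (n + 1) (Finset.mem_Icc.mpr ⟨by omega, by simp at ht; omega⟩)).1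
  have hsum := sum_Icc_le_of_le_rpow_add_mul_sub hε (by linarith : 0 ≤ c + ε) hLD
    (fun t => sq_nonneg ‖xs - x t‖) T fun t ht => by
      obtain ⟨hnext, hmin⟩ := hupd t ht
      refine max_zero_le_of_isMinOn_linearized_step hX hg hxs hgxs (hmem t ht) hnext
        (hdiff t ht _ (hmem t ht)) (hlip t ht) hL (hD _ hxs _ hnext)
        (by exact_mod_cast (Finset.mem_Icc.mp ht).1) hc₁ ?_ hmin
      rw [hγ t ht]
      exact mul_le_mul_of_nonneg_right (hlam t ht) (by positivity)
  have hA1 : ‖xs - x 1‖ ^ 2 ≤ D ^ 2 := pow_le_pow_left₀ (norm_nonneg _) (hD _ hxs _ hx1) 2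
  linarith [sq_nonneg D, (by positivity : 0 ≤ 27 * F ^ 2 * (d : ℝ) ^ 2 / 4)]

/-- Deterministic hard-constraint violation bound (convex case, fixed
constraint, Theorem 1): with `λ_t ≥ t^c`, `γ_t = t^{c+ε}`, `α_t = t^c`,
`∑_{t=1}^T [g(x_{t+1})]₊ ≤ 27F²d²/4 + 3FdD(1+ε)/ε + D²`. -/
theorem violation_bound_convex_fixed
    {d : ℕ} (hd : 1 ≤ d)
    (X : Set (EuclideanSpace ℝ (Fin d)))
    (hne : X.Nonempty) (hcomp : IsCompact X) (hX : Convex ℝ X)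
    (D : ℝ) (hD : ∀ x ∈ X, ∀ y ∈ X, ‖x - y‖ ≤ D)
    (F : ℝ) (hF : 0 < F)
    (c ε : ℝ) (hc₁ : 1 / 2 ≤ c) (hc₂ : c < 1) (hε : 0 < ε)
    (T : ℕ) (hT : 1 ≤ T)
    (h : ℕ → EuclideanSpace ℝ (Fin d) → ℝ)
    (hconv : ∀ t ∈ Finset.Icc 1 T, ConvexOn ℝ X (h t))
    (hdiff : ∀ t ∈ Finset.Icc 1 T, ∀ x ∈ X, DifferentiableAt ℝ (h t) x)
    (hlip : ∀ t ∈ Finset.Icc 1 T, ∀ x ∈ X, ∀ y ∈ X,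
      |h t x - h t y| ≤ 3 * F * (d : ℝ) * ‖x - y‖)
    (g : EuclideanSpace ℝ (Fin d) → ℝ) (hg : ConvexOn ℝ X g)
    (xs : EuclideanSpace ℝ (Fin d)) (hxs : xs ∈ X) (hgxs : g xs ≤ 0)
    (x : ℕ → EuclideanSpace ℝ (Fin d)) (hx1 : x 1 ∈ X)
    (lam γ : ℕ → ℝ)
    (hlam : ∀ t ∈ Finset.Icc 1 T, (t : ℝ) ^ c ≤ lam t)
    (hγ : ∀ t ∈ Finset.Icc 1 T, γ t = (t : ℝ) ^ (c + ε))
    (hupd : ∀ t ∈ Finset.Icc 1 T, x (t + 1) ∈ X ∧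
      IsMinOn (fun z => h t (x t) + ⟪gradient (h t) (x t), z - x t⟫
        + lam t * γ t * max (g z) 0 + (t : ℝ) ^ c / 2 * ‖z - x t‖ ^ 2) X (x (t + 1))) :
    (∑ t ∈ Finset.Icc 1 T, max (g (x (t + 1))) 0) ≤
      27 * F ^ 2 * (d : ℝ) ^ 2 / 4 + 3 * F * (d : ℝ) * D * (1 + ε) / ε + D ^ 2 :=
  violation_bound_convex_fixed_general X hX D hD F hF c ε hc₁ hε T h hdiff hlip g hg xs hxs hgxs x
    hx1 lam γ hlam hγ hupd
end

section
/- Let X ⊆ ℝ^d be a nonempty compact convex set with ‖x − y‖₂ ≤ D for all x, y ∈ X, let F > 0, d ≥ 1, c ∈ [1/2, 1), and let T be a positive integer. For each t = 1, …, T let h_t : ℝ^d → ℝ be convex, differentiable, and Lipschitz continuous with constant 3Fd on X, let g_t : ℝ^d → ℝ be convex on X, and suppose x* ∈ X satisfies g_t(x*) ≤ 0 for all t. Let x_1 ∈ X, and for each t let λ_t ≥ 0, γ_t > 0, α_t := t^c, and let x_{t+1} be the minimizer over X of x ↦ h_t(x_t) + ⟨∇h_t(x_t), x − x_t⟩ +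 λ_t γ_t·max{g_t(x), 0} + (α_t/2)‖x − x_t‖₂². Then ∑_{t=1}^{T} ‖x_t − x_{t+1}‖₂² ≤ (12FdD/(1−c))·T^{1−c} + D². -/
open RealInnerProductSpace Set Filter Topology

/-!
Each iterate minimizes an `α_t`-strongly convex surrogate over `X`, so comparing it with `x*`
(three-point inequality) gives
`α_t/2 ‖x_t - x_{t+1}‖² ≤ ⟪∇h_t(x_t), x* - x_t⟫ - ⟪∇h_t(x_t), x_{t+1} - x_t⟫
  + α_t/2 (‖x* - x_t‖² - ‖x* - x_{t+1}‖²)`,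
the penalty term dropping out since `g_t(x*) ≤ 0`. Lipschitz continuity bounds each inner product
by `3FdD`, the distance terms telescope to at most `D²`, and `∑ t^(-c) ≤ T^(1-c)/(1-c)` follows
termwise from Bernoulli's inequality for the concave power `s ↦ s^(1-c)`.
-/

theorem Real.mul_rpow_sub_one_le_rpow_sub_rpow {p t : ℝ} (hp₀ : 0 ≤ p) (hp₁ : p ≤ 1)
    (ht : 1 ≤ t) : p * t ^ (p - 1) ≤ t ^ p - (t - 1) ^ p := by
  have ht₀ : 0 < t := by linarith
  have hbern : (1 + -t⁻¹) ^ p ≤ 1 + p * -t⁻¹ :=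
    rpow_one_add_le_one_add_mul_self (by simpa using inv_le_one_of_one_le₀ ht) hp₀ hp₁
  have hsplit : (t - 1) ^ p = (1 + -t⁻¹) ^ p * t ^ p := by
    rw [← mul_rpow (by simpa using inv_le_one_of_one_le₀ ht) ht₀.le]
    congr 1
    field_simp
    ring
  rw [hsplit, rpow_sub_one ht₀.ne']
  have := mul_le_mul_of_nonneg_right hbern (rpow_nonneg ht₀.le p)
  linarith [show p * -t⁻¹ * t ^ p = -(p * (t ^ p / t)) by ring]

theorem Real.sum_Icc_inv_rpow_le {c : ℝ} (hc₀ : 0 ≤ c) (hc₁ : c < 1) (T : ℕ) :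
    ∑ t ∈ Finset.Icc 1 T, ((t : ℝ) ^ c)⁻¹ ≤ (T : ℝ) ^ (1 - c) / (1 - c) := by
  have hc : 0 < 1 - c := by linarith
  induction T with
  | zero => simp [zero_rpow hc.ne']
  | succ n ih =>
    have hstep := mul_rpow_sub_one_le_rpow_sub_rpow hc.le (by linarith)
      (le_add_of_nonneg_left n.cast_nonneg : (1 : ℝ) ≤ n + 1)
    rw [sub_sub_cancel_left, rpow_neg (by positivity), add_sub_cancel_right] at hstep
    rw [Finset.sum_Icc_succ_top (by omega), Nat.cast_succ]
    calc _ ≤ (n : ℝ) ^ (1 - c) / (1 - c)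
          + (((n : ℝ) + 1) ^ (1 - c) - (n : ℝ) ^ (1 - c)) / (1 - c) := by
          gcongr
          rwa [le_div_iff₀ hc, mul_comm]
      _ = _ := by ring

theorem sum_Icc_le_of_le_div_rpow_add_sub {a u : ℕ → ℝ} {K c : ℝ} {T : ℕ} (hT : 1 ≤ T)
    (hK : 0 ≤ K) (hc₀ : 0 ≤ c) (hc₁ : c < 1)
    (ha : ∀ t ∈ Finset.Icc 1 T, a t ≤ K / (t : ℝ) ^ c + (u t - u (t + 1))) :
    ∑ t ∈ Finset.Icc 1 T, a t ≤ K / (1 - c) * (T : ℝ) ^ (1 - c) + (u 1 - u (T + 1)) := by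
  have htel := Finset.sum_Icc_sub hT (fun t => -u t)
  simp only [neg_sub_neg] at htel
  calc ∑ t ∈ Finset.Icc 1 T, a t
      ≤ ∑ t ∈ Finset.Icc 1 T, (K / (t : ℝ) ^ c + (u t - u (t + 1))) := Finset.sum_le_sum ha
    _ = K * ∑ t ∈ Finset.Icc 1 T, ((t : ℝ) ^ c)⁻¹ + (u 1 - u (T + 1)) := by
      simp only [div_eq_mul_inv]
      rw [Finset.sum_add_distrib, ← Finset.mul_sum, htel]
    _ ≤ K * ((T : ℝ) ^ (1 - c) / (1 - c)) + (u 1 - u (T + 1)) := by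
      gcongr
      exact Real.sum_Icc_inv_rpow_le hc₀ hc₁ T
    _ = K / (1 - c) * (T : ℝ) ^ (1 - c) + (u 1 - u (T + 1)) := by ring

theorem HasFDerivAt.abs_apply_sub_le {E : Type*} [NormedAddCommGroup E] [NormedSpace ℝ E]
    {X : Set E} (hX : Convex ℝ X) {f : E → ℝ} {f' : E →L[ℝ] ℝ} {a b : E}
    (hf : HasFDerivAt f f' a) (ha : a ∈ X) (hb : b ∈ X) {L : ℝ}
    (hlip : ∀ x ∈ X, ∀ y ∈ X, |f x - f y| ≤ L * ‖x - y‖) :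
    |f' (b - a)| ≤ L * ‖b - a‖ := by
  refine le_of_tendsto (hf.hasLineDerivAt (b - a)).tendsto_slope_zero_right.abs ?_
  filter_upwards [Ioo_mem_nhdsGT one_pos] with s ⟨hs0, hs1⟩
  have hmem : a + s • (b - a) ∈ X := hX.add_smul_sub_mem ha hb ⟨hs0.le, hs1.le⟩
  calc |s⁻¹ • (f (a + s • (b - a)) - f a)| = s⁻¹ * |f (a + s • (b - a)) - f a| := by
        rw [smul_eq_mul, abs_mul, abs_inv, _root_.abs_of_pos hs0]
    _ ≤ s⁻¹ * (L * (s * ‖b - a‖)) := by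
        gcongr
        simpa [norm_smul, _root_.abs_of_pos hs0] using hlip _ hmem a ha
    _ = L * ‖b - a‖ := by field_simp

theorem StrongConvexOn.add_mul_sq_norm_sub_le_of_isMinOn {E : Type*} [NormedAddCommGroup E]
    [NormedSpace ℝ E] {X : Set E} {m : ℝ} {f : E → ℝ} {y z : E} (hf : StrongConvexOn X m f)
    (hmin : IsMinOn f X y) (hy : y ∈ X) (hz : z ∈ X) :
    f y + m / 2 * ‖z - y‖ ^ 2 ≤ f z := by
  -- test minimality at the points `(1 - θ) • y + θ • z` and let `θ → 0`
  have hmix : ∀ θ ∈ Ioo (0 : ℝ) 1, m / 2 * ‖z - y‖ ^ 2 * (1 - θ) ≤ f z - f y := by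
    intro θ ⟨hθ0, hθ1⟩
    have hconv := hf.2 hy hz (sub_nonneg.2 hθ1.le) hθ0.le (by ring)
    have hle := isMinOn_iff.1 hmin _ (hf.1 hy hz (sub_nonneg.2 hθ1.le) hθ0.le (by ring))
    rw [norm_sub_rev] at hconv
    simp only [smul_eq_mul] at hconv
    nlinarith
  have hlim : Tendsto (fun θ : ℝ => m / 2 * ‖z - y‖ ^ 2 * (1 - θ)) (𝓝[>] 0)
      (𝓝 (m / 2 * ‖z - y‖ ^ 2)) :=
    tendsto_nhdsWithin_of_tendsto_nhds (Continuous.tendsto' (by fun_prop) _ _ (by simp))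
  have := le_of_tendsto hlim (by filter_upwards [Ioo_mem_nhdsGT one_pos] using hmix)
  linarith

theorem ConvexOn.strongConvexOn_add_mul_sq_norm_sub {E : Type*} [NormedAddCommGroup E]
    [InnerProductSpace ℝ E] {X : Set E} {ψ : E → ℝ} (hψ : ConvexOn ℝ X ψ) (m : ℝ) (p : E) :
    StrongConvexOn X m (fun z => ψ z + m / 2 * ‖z - p‖ ^ 2) := by
  rw [strongConvexOn_iff_convex]
  refine (hψ.add (((-m) • innerₛₗ ℝ p).convexOn hψ.1 |>.add_const (m / 2 * ‖p‖ ^ 2))).congr ?_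
  intro z _
  simp only [Pi.add_apply, LinearMap.smul_apply, innerₛₗ_apply_apply, smul_eq_mul, norm_sub_sq_real,
    real_inner_comm p z]
  ring

section LinearizedProx

variable {E : Type*} [NormedAddCommGroup E] [InnerProductSpace ℝ E] {X : Set E}
  {G : E → ℝ} {a r α : ℝ} {v p y z : E}

theorem convexOn_linearized_add_mul_max_zero (hX : Convex ℝ X) (hG : ConvexOn ℝ X G)
    (hr : 0 ≤ r) : ConvexOn ℝ X (fun w => a + ⟪v, w - p⟫ + r * max (G w) 0) := by
  refine ((innerₛₗ ℝ v).convexOn hX |>.add_const (a - ⟪v, p⟫) |>.add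
    ((hG.sup (convexOn_const 0 hX)).smul hr)).congr ?_
  intro w _
  simp only [Pi.add_apply, innerₛₗ_apply_apply, inner_sub_right, Pi.sup_apply, smul_eq_mul]
  ring

theorem mul_sq_norm_sub_le_of_isMinOn_linearizedProx (hX : Convex ℝ X) (hG : ConvexOn ℝ X G)
    (hr : 0 ≤ r) (hy : y ∈ X) (hz : z ∈ X) (hGz : G z ≤ 0)
    (hmin : IsMinOn (fun w => a + ⟪v, w - p⟫ + r * max (G w) 0 + α / 2 * ‖w - p‖ ^ 2) X y) :
    α / 2 * ‖p - y‖ ^ 2 ≤ ⟪v, z - p⟫ - ⟪v, y - p⟫ + α / 2 * (‖z - p‖ ^ 2 - ‖z - y‖ ^ 2) := by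
  have hthree := ((convexOn_linearized_add_mul_max_zero hX hG hr).strongConvexOn_add_mul_sq_norm_sub
      α p).add_mul_sq_norm_sub_le_of_isMinOn hmin hy hz
  have hGy : 0 ≤ r * max (G y) 0 := mul_nonneg hr (le_max_right _ _)
  rw [max_eq_right hGz] at hthree
  rw [norm_sub_rev p y]
  linarith

theorem sq_norm_sub_le_of_isMinOn_gradientProx [CompleteSpace E] (hX : Convex ℝ X) {D : ℝ}
    (hD : ∀ x ∈ X, ∀ y ∈ X, ‖x - y‖ ≤ D) {f : E → ℝ} {L : ℝ} (hp : p ∈ X) (hy : y ∈ X)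
    (hz : z ∈ X) (hf : DifferentiableAt ℝ f p) (hL : 0 ≤ L)
    (hlip : ∀ x ∈ X, ∀ y ∈ X, |f x - f y| ≤ L * ‖x - y‖) (hG : ConvexOn ℝ X G) (hGz : G z ≤ 0)
    (hr : 0 ≤ r) (hα : 0 < α)
    (hmin : IsMinOn (fun w => f p + ⟪gradient f p, w - p⟫ + r * max (G w) 0
      + α / 2 * ‖w - p‖ ^ 2) X y) :
    ‖p - y‖ ^ 2 ≤ 4 * L * D / α + (‖z - p‖ ^ 2 - ‖z - y‖ ^ 2) := by
  have hgrad : ∀ b ∈ X, |⟪gradient f p, b - p⟫| ≤ L * D := fun b hb =>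
    (hf.hasGradientAt.hasFDerivAt.abs_apply_sub_le hX hp hb hlip).trans
      (mul_le_mul_of_nonneg_left (hD b hb p hp) hL)
  have hprox := mul_sq_norm_sub_le_of_isMinOn_linearizedProx hX hG hr hy hz hGz hmin
  calc ‖p - y‖ ^ 2 = 2 / α * (α / 2 * ‖p - y‖ ^ 2) := by field_simp
    _ ≤ 2 / α * (2 * (L * D) + α / 2 * (‖z - p‖ ^ 2 - ‖z - y‖ ^ 2)) := by
      gcongr
      linarith [abs_le.1 (hgrad z hz), abs_le.1 (hgrad y hy)]
    _ = 4 * L * D / α + (‖z - p‖ ^ 2 - ‖z - y‖ ^ 2) := by field_simp; ring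

end LinearizedProx

theorem displacement_bound_convex_general
    {d : ℕ}
    (X : Set (EuclideanSpace ℝ (Fin d)))
    (hX : Convex ℝ X)
    (D : ℝ) (hD : ∀ x ∈ X, ∀ y ∈ X, ‖x - y‖ ≤ D)
    (F : ℝ) (hF : 0 < F)
    (c : ℝ) (hc₁ : 1 / 2 ≤ c) (hc₂ : c < 1)
    (T : ℕ) (hT : 1 ≤ T)
    (h : ℕ → EuclideanSpace ℝ (Fin d) → ℝ)
    (hdiff : ∀ t ∈ Finset.Icc 1 T, ∀ x ∈ X, DifferentiableAt ℝ (h t) x)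
    (hlip : ∀ t ∈ Finset.Icc 1 T, ∀ x ∈ X, ∀ y ∈ X,
      |h t x - h t y| ≤ 3 * F * (d : ℝ) * ‖x - y‖)
    (g : ℕ → EuclideanSpace ℝ (Fin d) → ℝ)
    (hg : ∀ t ∈ Finset.Icc 1 T, ConvexOn ℝ X (g t))
    (xs : EuclideanSpace ℝ (Fin d)) (hxs : xs ∈ X)
    (hgxs : ∀ t ∈ Finset.Icc 1 T, g t xs ≤ 0)
    (x : ℕ → EuclideanSpace ℝ (Fin d)) (hx1 : x 1 ∈ X)
    (lam γ : ℕ → ℝ)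
    (hlam : ∀ t ∈ Finset.Icc 1 T, 0 ≤ lam t)
    (hγ : ∀ t ∈ Finset.Icc 1 T, 0 < γ t)
    (hupd : ∀ t ∈ Finset.Icc 1 T, x (t + 1) ∈ X ∧
      IsMinOn (fun z => h t (x t) + ⟪gradient (h t) (x t), z - x t⟫
        + lam t * γ t * max (g t z) 0 + (t : ℝ) ^ c / 2 * ‖z - x t‖ ^ 2) X (x (t + 1))) :
    (∑ t ∈ Finset.Icc 1 T, ‖x t - x (t + 1)‖ ^ 2) ≤
      12 * F * (d : ℝ) * D / (1 - c) * (T : ℝ) ^ (1 - c) + D ^ 2 := by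
  have hD₀ : 0 ≤ D := (norm_nonneg _).trans (hD xs hxs xs hxs)
  have hmem : ∀ t ∈ Finset.Icc 1 T, x t ∈ X := by
    rintro (_ | _ | t) ht <;> simp only [Finset.mem_Icc] at ht
    · omega
    · exact hx1
    · exact (hupd (t + 1) (Finset.mem_Icc.2 ⟨by omega, by omega⟩)).1
  have hstep : ∀ t ∈ Finset.Icc 1 T, ‖x t - x (t + 1)‖ ^ 2 ≤
      4 * (3 * F * d) * D / (t : ℝ) ^ c + (‖xs - x t‖ ^ 2 - ‖xs - x (t + 1)‖ ^ 2) :=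
    fun t ht => sq_norm_sub_le_of_isMinOn_gradientProx hX hD (hmem t ht) (hupd t ht).1 hxs
      (hdiff t ht _ (hmem t ht)) (by positivity) (hlip t ht) (hg t ht) (hgxs t ht)
      (mul_nonneg (hlam t ht) (hγ t ht).le)
      (Real.rpow_pos_of_pos (Nat.cast_pos.2 (Finset.mem_Icc.1 ht).1) c) (hupd t ht).2
  calc ∑ t ∈ Finset.Icc 1 T, ‖x t - x (t + 1)‖ ^ 2
      ≤ 4 * (3 * F * d) * D / (1 - c) * (T : ℝ) ^ (1 - c)
          + (‖xs - x 1‖ ^ 2 - ‖xs - x (T + 1)‖ ^ 2) :=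
      sum_Icc_le_of_le_div_rpow_add_sub hT (by positivity) (by linarith) hc₂ hstep
    _ ≤ 12 * F * d * D / (1 - c) * (T : ℝ) ^ (1 - c) + D ^ 2 := by
      rw [show (4 : ℝ) * (3 * F * d) = 12 * F * d by ring]
      gcongr
      exact (sub_le_self _ (sq_nonneg _)).trans
        (pow_le_pow_left₀ (norm_nonneg _) (hD xs hxs _ hx1) 2)

/-- Iterate-displacement bound (Theorem 2): with `α_t = t^c`,
`∑_{t=1}^T ‖x_t − x_{t+1}‖² ≤ (12FdD/(1−c))·T^{1−c} + D²`. -/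
theorem displacement_bound_convex
    {d : ℕ} (hd : 1 ≤ d)
    (X : Set (EuclideanSpace ℝ (Fin d)))
    (hne : X.Nonempty) (hcomp : IsCompact X) (hX : Convex ℝ X)
    (D : ℝ) (hD : ∀ x ∈ X, ∀ y ∈ X, ‖x - y‖ ≤ D)
    (F : ℝ) (hF : 0 < F)
    (c : ℝ) (hc₁ : 1 / 2 ≤ c) (hc₂ : c < 1)
    (T : ℕ) (hT : 1 ≤ T)
    (h : ℕ → EuclideanSpace ℝ (Fin d) → ℝ)
    (hconv : ∀ t ∈ Finset.Icc 1 T, ConvexOn ℝ X (h t))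
    (hdiff : ∀ t ∈ Finset.Icc 1 T, ∀ x ∈ X, DifferentiableAt ℝ (h t) x)
    (hlip : ∀ t ∈ Finset.Icc 1 T, ∀ x ∈ X, ∀ y ∈ X,
      |h t x - h t y| ≤ 3 * F * (d : ℝ) * ‖x - y‖)
    (g : ℕ → EuclideanSpace ℝ (Fin d) → ℝ)
    (hg : ∀ t ∈ Finset.Icc 1 T, ConvexOn ℝ X (g t))
    (xs : EuclideanSpace ℝ (Fin d)) (hxs : xs ∈ X)
    (hgxs : ∀ t ∈ Finset.Icc 1 T, g t xs ≤ 0)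
    (x : ℕ → EuclideanSpace ℝ (Fin d)) (hx1 : x 1 ∈ X)
    (lam γ : ℕ → ℝ)
    (hlam : ∀ t ∈ Finset.Icc 1 T, 0 ≤ lam t)
    (hγ : ∀ t ∈ Finset.Icc 1 T, 0 < γ t)
    (hupd : ∀ t ∈ Finset.Icc 1 T, x (t + 1) ∈ X ∧
      IsMinOn (fun z => h t (x t) + ⟪gradient (h t) (x t), z - x t⟫
        + lam t * γ t * max (g t z) 0 + (t : ℝ) ^ c / 2 * ‖z - x t‖ ^ 2) X (x (t + 1))) :
    (∑ t ∈ Finset.Icc 1 T, ‖x t - x (t + 1)‖ ^ 2) ≤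
      12 * F * (d : ℝ) * D / (1 - c) * (T : ℝ) ^ (1 - c) + D ^ 2 :=
  displacement_bound_convex_general X hX D hD F hF c hc₁ hc₂ T hT h hdiff hlip g hg xs hxs hgxs x
    hx1 lam γ hlam hγ hupd
end

section
/- Let X ⊆ ℝ^d be a nonempty compact convex set with ‖x − y‖₂ ≤ D for all x, y ∈ X, let F > 0, G > 0, d ≥ 1, c ∈ [1/2, 1), ε > 0, and let T be a positive integer. For each t = 1, …, T let h_t : ℝ^d → ℝ be convex, differentiable, and Lipschitz continuous with constant 3Fd on X, let g_t : ℝ^d → ℝ be convex and Lipschitz continuous with constant G on X, and suppose x* ∈ X satisfies g_t(x*) ≤ 0 for all t. Let x_1 ∈ X, and for each t let λ_t ≥ t^c, γ_t := t^{c+ε}, α_t := t^c, and let x_{t+1} be the minimizer over X of x ↦ h_t(x_t) + ⟨∇h_t(x_t), x − x_t⟩ + λ_t γ_t·max{g_t(x), 0} + (α_t/2)‖x − x_t‖₂². Then ∑_{t=1}^{T} max{g_t(x_t), 0} ≤ ((27F²d² + G²)/4 + 3FdD(8 + 1/ε) + 2D²)·T^{1 − c/2}. -/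
/-!
Test the three-point inequality of the proximal step `x_t ↦ x_{t+1}` at the feasible point `x*`,
where `[g_t(x*)]₊ = 0`. Bounding the gradient term `⟪∇h_t(x_t), x* - x_{t+1}⟫` by `3FdD` through
Lipschitz continuity gives, with `C_t = λ_t γ_t ≥ t^{c/2}` and `α_t = t^c`,
`C_t [g_t(x_{t+1})]₊ + (α_t/2)‖x_{t+1} - x_t‖² ≤ 3FdD + (α_t/2)(‖x* - x_t‖² - ‖x* - x_{t+1}‖²)`.
Passing from `x_{t+1}` to `x_t` costs `G‖x_t - x_{t+1}‖`, which Young's inequality with weight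
`t^{c/2}` absorbs into the quadratic term, so that
`[g_t(x_t)]₊ ≤ (G²/8 + 12FdD) t^{-c/2} + 2 t^{c/2} (‖x* - x_t‖² - ‖x* - x_{t+1}‖²)`.
Summing, `∑ t^{-c/2} ≤ 2 T^{1-c/2}`, and Abel summation bounds the weighted telescoping sum by
`T^{c/2} D² ≤ T^{1-c/2} D²`.
-/

open RealInnerProductSpace Set Filter Topology

section Convexity

variable {E : Type*} [NormedAddCommGroup E] [NormedSpace ℝ E]

theorem StrongConvexOn.add_sq_le_of_isMinOn {X : Set E} {m : ℝ} {f : E → ℝ} {y z : E}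
    (hf : StrongConvexOn X m f) (hmin : IsMinOn f X y) (hy : y ∈ X) (hz : z ∈ X) :
    f y + m / 2 * ‖y - z‖ ^ 2 ≤ f z := by
  set Q := m / 2 * ‖y - z‖ ^ 2
  have hθ : ∀ θ ∈ Ioo (0 : ℝ) 1, f y + (1 - θ) * Q ≤ f z := by
    rintro θ ⟨hθ0, hθ1⟩
    have hconv := hf.2 hy hz (sub_nonneg.2 hθ1.le) hθ0.le (sub_add_cancel 1 θ)
    have hle : f y ≤ f _ := hmin (hf.1 hy hz (sub_nonneg.2 hθ1.le) hθ0.le (sub_add_cancel 1 θ))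
    simp only [smul_eq_mul] at hconv
    refine le_of_mul_le_mul_left ?_ hθ0
    linear_combination hle + hconv
  have hcont : Continuous fun θ : ℝ => f y + (1 - θ) * Q := by fun_prop
  have hlim : Tendsto (fun θ : ℝ => f y + (1 - θ) * Q) (𝓝[>] 0) (𝓝 (f y + Q)) := by
    simpa using (hcont.tendsto 0).mono_left nhdsWithin_le_nhds
  exact le_of_tendsto hlim (eventually_of_mem (Ioo_mem_nhdsGT one_pos) hθ)

theorem HasFDerivAt.apply_sub_le_of_abs_sub_le {X : Set E} {f : E → ℝ} {f' : E →L[ℝ] ℝ}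
    {M : ℝ} {x₀ w w' : E} (hX : Convex ℝ X) (hf : HasFDerivAt f f' x₀) (hx₀ : x₀ ∈ X)
    (hlip : ∀ x ∈ X, ∀ y ∈ X, |f x - f y| ≤ M * ‖x - y‖) (hw : w ∈ X) (hw' : w' ∈ X) :
    f' (w - w') ≤ M * ‖w - w'‖ := by
  -- `X` may have empty interior, so move along the segments from `x₀` to `w` and to `w'`,
  -- along which the difference is `s • (w - w')`.
  set φ : ℝ → ℝ := fun s =>
    f (x₀ + s • (w - x₀)) - f (x₀ + s • (w' - x₀)) - s * (M * ‖w - w'‖)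
  have hline : ∀ u : E, HasDerivAt (fun s : ℝ => f (x₀ + s • u)) (f' u) 0 := fun u => by
    have := ((hasDerivAt_id (0 : ℝ)).smul_const u).const_add x₀
    simp only [id, one_smul] at this
    exact (by simpa using hf : HasFDerivAt f f' (x₀ + (0 : ℝ) • u)).comp_hasDerivAt 0 this
  have hφ : HasDerivAt φ (f' (w - x₀) - f' (w' - x₀) - M * ‖w - w'‖) 0 :=
    ((hline _).sub (hline _)).sub (hasDerivAt_mul_const (M * ‖w - w'‖))
  have hmax : IsMaxOn φ (Icc 0 1) 0 := fun s hs => by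
    have hsub : (x₀ + s • (w - x₀)) - (x₀ + s • (w' - x₀)) = s • (w - w') := by
      rw [smul_sub, smul_sub, smul_sub]; abel
    have := hlip _ (hX.add_smul_sub_mem hx₀ hw hs) _ (hX.add_smul_sub_mem hx₀ hw' hs)
    rw [hsub, norm_smul, Real.norm_of_nonneg hs.1] at this
    show φ s ≤ φ 0
    simp only [φ, zero_smul, add_zero, sub_self, zero_mul]
    linarith [le_abs_self (f (x₀ + s • (w - x₀)) - f (x₀ + s • (w' - x₀)))]
  have hcone : (1 : ℝ) ∈ posTangentConeAt (Icc 0 1) 0 :=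
    mem_posTangentConeAt_of_segment_subset (by rw [zero_add, segment_eq_Icc zero_le_one])
  have := hmax.localize.hasFDerivWithinAt_nonpos hφ.hasFDerivAt.hasFDerivWithinAt hcone
  have hsplit : f' (w - w') = f' (w - x₀) - f' (w' - x₀) := by
    rw [← map_sub]; congr 1; abel
  rw [ContinuousLinearMap.toSpanSingleton_apply, one_smul] at this
  linarith

end Convexity

section InnerProduct

variable {E : Type*} [NormedAddCommGroup E] [InnerProductSpace ℝ E]

theorem ConvexOn.add_sq_norm_sub_le_of_isMinOn {X : Set E} {ψ : E → ℝ} {β : ℝ} {p y z : E}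
    (hψ : ConvexOn ℝ X ψ) (hmin : IsMinOn (fun u => ψ u + β * ‖u - p‖ ^ 2) X y)
    (hy : y ∈ X) (hz : z ∈ X) :
    ψ y + β * ‖y - p‖ ^ 2 + β * ‖y - z‖ ^ 2 ≤ ψ z + β * ‖z - p‖ ^ 2 := by
  have hstrong : StrongConvexOn X (2 * β) (fun u => ψ u + β * ‖u - p‖ ^ 2) := by
    rw [strongConvexOn_iff_convex]
    refine (hψ.add (((innerₛₗ ℝ (-(2 * β) • p)).convexOn hψ.1).add_const (β * ‖p‖ ^ 2))).congr
      fun u _ => ?_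
    simp only [Pi.add_apply, innerₛₗ_apply_apply, real_inner_smul_left, norm_sub_sq_real,
      real_inner_comm p u]
    ring
  have := hstrong.add_sq_le_of_isMinOn hmin hy hz
  linarith

theorem ConvexOn.const_add_inner_add_mul_max_zero {X : Set E} {g : E → ℝ} {C : ℝ}
    (hg : ConvexOn ℝ X g) (a : ℝ) (hC : 0 ≤ C) (v p : E) :
    ConvexOn ℝ X (fun u => a + ⟪v, u - p⟫ + C * max (g u) 0) := by
  refine ((((innerₛₗ ℝ v).convexOn hg.1).add_const (a - ⟪v, p⟫)).add
    ((hg.sup (convexOn_const 0 hg.1)).smul hC)).congr fun u _ => ?_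
  simp only [Pi.add_apply, innerₛₗ_apply_apply, inner_sub_right, Pi.sup_apply, smul_eq_mul]
  ring

theorem max_zero_le_of_proxStep [CompleteSpace E] {X : Set E} {f g : E → ℝ} {M G D C w : ℝ}
    {p y z : E} (hp : p ∈ X) (hy : y ∈ X) (hz : z ∈ X) (hf : DifferentiableAt ℝ f p)
    (hflip : ∀ x ∈ X, ∀ x' ∈ X, |f x - f x'| ≤ M * ‖x - x'‖) (hM : 0 ≤ M)
    (hg : ConvexOn ℝ X g) (hglip : ∀ x ∈ X, ∀ x' ∈ X, |g x - g x'| ≤ G * ‖x - x'‖)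
    (hgz : g z ≤ 0) (hD : ‖z - y‖ ≤ D) (hw : 0 < w) (hwC : w ≤ C)
    (hmin : IsMinOn (fun u => f p + ⟪gradient f p, u - p⟫ + C * max (g u) 0
      + w ^ 2 / 2 * ‖u - p‖ ^ 2) X y) :
    max (g p) 0 ≤ (G ^ 2 / 8 + 4 * (M * D)) * w⁻¹ + 2 * (w * (‖z - p‖ ^ 2 - ‖z - y‖ ^ 2)) := by
  have hC : 0 ≤ C := hw.le.trans hwC
  have hthree := (hg.const_add_inner_add_mul_max_zero (f p) hC (gradient f p) p
    ).add_sq_norm_sub_le_of_isMinOn hmin hy hz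
  rw [max_eq_right hgz, norm_sub_rev y z] at hthree
  have hgrad : ⟪gradient f p, z - y⟫ ≤ M * D := by
    rw [gradient, InnerProductSpace.toDual_symm_apply]
    exact (hf.hasFDerivAt.apply_sub_le_of_abs_sub_le hg.1 hp hflip hz hy).trans
      (mul_le_mul_of_nonneg_left hD hM)
  have hinner : ⟪gradient f p, z - p⟫ = ⟪gradient f p, y - p⟫ + ⟪gradient f p, z - y⟫ := by
    rw [← inner_add_right, sub_add_sub_cancel']
  have htransfer : max (g p) 0 ≤ max (g y) 0 + G * ‖y - p‖ := by
    have := (le_abs_self _).trans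
      ((abs_max_sub_max_le_abs (g p) (g y) 0).trans (hglip p hp y hy))
    rw [norm_sub_rev] at this
    linarith
  have hyoung : w * (G * ‖y - p‖) ≤ G ^ 2 / 8 + 2 * w ^ 2 * ‖y - p‖ ^ 2 := by
    nlinarith [sq_nonneg (G - 4 * w * ‖y - p‖)]
  have hviol : w * max (g y) 0 ≤ C * max (g y) 0 :=
    mul_le_mul_of_nonneg_right hwC (le_max_right _ _)
  have hCviol : 0 ≤ C * max (g y) 0 := mul_nonneg hC (le_max_right _ _)
  have hscaled : w * max (g p) 0
      ≤ G ^ 2 / 8 + 4 * (M * D) + 2 * w ^ 2 * (‖z - p‖ ^ 2 - ‖z - y‖ ^ 2) := by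
    linarith [mul_le_mul_of_nonneg_left htransfer hw.le]
  calc max (g p) 0 = w⁻¹ * (w * max (g p) 0) := by field_simp
    _ ≤ w⁻¹ * (G ^ 2 / 8 + 4 * (M * D) + 2 * w ^ 2 * (‖z - p‖ ^ 2 - ‖z - y‖ ^ 2)) := by
      gcongr
    _ = _ := by field_simp

end InnerProduct

theorem one_sub_mul_rpow_neg_le_sub {r x : ℝ} (hr0 : 0 ≤ r) (hr1 : r ≤ 1) (hx : 1 ≤ x) :
    (1 - r) * x ^ (-r) ≤ x ^ (1 - r) - (x - 1) ^ (1 - r) := by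
  have hx0 : 0 < x := zero_lt_one.trans_le hx
  have hbern := rpow_one_add_le_one_add_mul_self (s := -x⁻¹)
    (neg_le_neg (inv_le_one_of_one_le₀ hx)) (p := 1 - r) (by linarith) (by linarith)
  have hfactor : (x - 1) ^ (1 - r) = x ^ (1 - r) * (1 + -x⁻¹) ^ (1 - r) := by
    rw [← Real.mul_rpow hx0.le (by linarith [inv_le_one_of_one_le₀ hx])]
    congr 1
    field_simp
    ring
  have hneg : x ^ (-r) = x ^ (1 - r) * x⁻¹ := by
    rw [← div_eq_mul_inv, ← Real.rpow_sub_one hx0.ne']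
    ring_nf
  rw [hfactor, hneg]
  nlinarith [mul_le_mul_of_nonneg_left hbern (Real.rpow_nonneg hx0.le (1 - r))]

theorem sum_Icc_rpow_neg_le {r : ℝ} (hr0 : 0 ≤ r) (hr1 : r < 1) (N : ℕ) :
    ∑ t ∈ Finset.Icc 1 N, (t : ℝ) ^ (-r) ≤ (N : ℝ) ^ (1 - r) / (1 - r) := by
  induction N with
  | zero => simp [Real.zero_rpow (by linarith : 1 - r ≠ 0)]
  | succ n ih =>
    rw [Finset.sum_Icc_succ_top (by omega)]
    have hstep := one_sub_mul_rpow_neg_le_sub hr0 hr1.le (x := (n + 1 : ℕ)) (by simp)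
    push_cast at hstep ⊢
    rw [add_sub_cancel_right] at hstep
    have : ((n : ℝ) + 1) ^ (-r) ≤ ((n + 1 : ℝ) ^ (1 - r) - (n : ℝ) ^ (1 - r)) / (1 - r) := by
      rw [le_div_iff₀ (by linarith)]
      linarith
    rw [sub_div] at this
    linarith

theorem sum_Icc_mul_sub_succ_le_s16 {u a : ℕ → ℝ} {B : ℝ} {N : ℕ} (hu : Monotone u) (hu0 : 0 ≤ u 0)
    (ha : ∀ t ∈ Finset.Icc 1 (N + 1), 0 ≤ a t ∧ a t ≤ B) :
    ∑ t ∈ Finset.Icc 1 N, u t * (a t - a (t + 1)) ≤ u N * B := by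
  have hB : ∀ n ≤ N, 0 ≤ B - a (n + 1) := fun n hn =>
    sub_nonneg.2 (ha (n + 1) (Finset.mem_Icc.2 ⟨by omega, by omega⟩)).2
  suffices h : ∀ n ≤ N, ∑ t ∈ Finset.Icc 1 n, u t * (a t - a (t + 1)) ≤ u n * (B - a (n + 1)) by
    have := (ha (N + 1) (Finset.mem_Icc.2 ⟨by omega, le_rfl⟩)).1
    nlinarith [h N le_rfl, hu0.trans (hu (Nat.zero_le N))]
  intro n hn
  induction n with
  | zero => simpa using mul_nonneg hu0 (hB 0 hn)
  | succ n ih =>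
    rw [Finset.sum_Icc_succ_top (by omega)]
    have := mul_le_mul_of_nonneg_right (hu n.le_succ) (hB n (by omega))
    linarith [ih (by omega)]

theorem rpow_half_le_mul_rpow_add {t c ε l : ℝ} (ht : 1 ≤ t) (hc : 0 ≤ c) (hε : 0 ≤ ε)
    (hl : t ^ c ≤ l) : t ^ (c / 2) ≤ l * t ^ (c + ε) := calc
  t ^ (c / 2) ≤ t ^ c := Real.rpow_le_rpow_of_exponent_le ht (by linarith)
  _ ≤ l := hl
  _ ≤ l * t ^ (c + ε) := le_mul_of_one_le_right ((by positivity : (0 : ℝ) ≤ _).trans hl)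
      (Real.one_le_rpow ht (by linarith))

theorem sum_le_of_le_rpow_neg_add_weighted_sub {P a : ℕ → ℝ} {K B r : ℝ} {T : ℕ}
    (hK : 0 ≤ K) (hr0 : 0 ≤ r) (hr : r ≤ 1 / 2) (hT : 1 ≤ T)
    (ha : ∀ t ∈ Finset.Icc 1 (T + 1), 0 ≤ a t ∧ a t ≤ B)
    (hP : ∀ t ∈ Finset.Icc 1 T, P t ≤ K * (t : ℝ) ^ (-r) + 2 * ((t : ℝ) ^ r * (a t - a (t + 1)))) :
    ∑ t ∈ Finset.Icc 1 T, P t ≤ (2 * K + 2 * B) * (T : ℝ) ^ (1 - r) := by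
  have hB : 0 ≤ B := (ha 1 (by simp)).1.trans (ha 1 (by simp)).2
  have hweights := sum_Icc_mul_sub_succ_le_s16 (u := fun t : ℕ => (t : ℝ) ^ r)
    (fun m n hmn => Real.rpow_le_rpow (by positivity) (by exact_mod_cast hmn) hr0)
    (by positivity) ha
  have hT1 : (1 : ℝ) ≤ T := by exact_mod_cast hT
  have hpowers : ∑ t ∈ Finset.Icc 1 T, (t : ℝ) ^ (-r) ≤ 2 * (T : ℝ) ^ (1 - r) :=
    (sum_Icc_rpow_neg_le hr0 (by linarith) T).trans <| div_le_of_le_mul₀ (by linarith)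
      (by positivity) (by nlinarith [Real.rpow_nonneg (by positivity : (0 : ℝ) ≤ T) (1 - r)])
  have hexp : (T : ℝ) ^ r ≤ (T : ℝ) ^ (1 - r) :=
    Real.rpow_le_rpow_of_exponent_le hT1 (by linarith)
  calc ∑ t ∈ Finset.Icc 1 T, P t
      ≤ ∑ t ∈ Finset.Icc 1 T, (K * (t : ℝ) ^ (-r) + 2 * ((t : ℝ) ^ r * (a t - a (t + 1)))) :=
        Finset.sum_le_sum hP
    _ = K * ∑ t ∈ Finset.Icc 1 T, (t : ℝ) ^ (-r)
          + 2 * ∑ t ∈ Finset.Icc 1 T, (t : ℝ) ^ r * (a t - a (t + 1)) := by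
        rw [Finset.sum_add_distrib, Finset.mul_sum, Finset.mul_sum]
    _ ≤ K * (2 * (T : ℝ) ^ (1 - r)) + 2 * ((T : ℝ) ^ r * B) := by gcongr
    _ ≤ (2 * K + 2 * B) * (T : ℝ) ^ (1 - r) := by
        linear_combination 2 * mul_le_mul_of_nonneg_right hexp hB

theorem violation_bound_convex_time_varying_general
    {d : ℕ}
    (X : Set (EuclideanSpace ℝ (Fin d)))
    (D : ℝ) (hD : ∀ x ∈ X, ∀ y ∈ X, ‖x - y‖ ≤ D)
    (F G : ℝ) (hF : 0 < F)
    (c ε : ℝ) (hc₁ : 1 / 2 ≤ c) (hc₂ : c < 1) (hε : 0 < ε)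
    (T : ℕ) (hT : 1 ≤ T)
    (h : ℕ → EuclideanSpace ℝ (Fin d) → ℝ)
    (hdiff : ∀ t ∈ Finset.Icc 1 T, ∀ x ∈ X, DifferentiableAt ℝ (h t) x)
    (hlip : ∀ t ∈ Finset.Icc 1 T, ∀ x ∈ X, ∀ y ∈ X,
      |h t x - h t y| ≤ 3 * F * (d : ℝ) * ‖x - y‖)
    (g : ℕ → EuclideanSpace ℝ (Fin d) → ℝ)
    (hg : ∀ t ∈ Finset.Icc 1 T, ConvexOn ℝ X (g t))
    (hglip : ∀ t ∈ Finset.Icc 1 T, ∀ x ∈ X, ∀ y ∈ X, |g t x - g t y| ≤ G * ‖x - y‖)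
    (xs : EuclideanSpace ℝ (Fin d)) (hxs : xs ∈ X)
    (hgxs : ∀ t ∈ Finset.Icc 1 T, g t xs ≤ 0)
    (x : ℕ → EuclideanSpace ℝ (Fin d)) (hx1 : x 1 ∈ X)
    (lam γ : ℕ → ℝ)
    (hlam : ∀ t ∈ Finset.Icc 1 T, (t : ℝ) ^ c ≤ lam t)
    (hγ : ∀ t ∈ Finset.Icc 1 T, γ t = (t : ℝ) ^ (c + ε))
    (hupd : ∀ t ∈ Finset.Icc 1 T, x (t + 1) ∈ X ∧
      IsMinOn (fun z => h t (x t) + ⟪gradient (h t) (x t), z - x t⟫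
        + lam t * γ t * max (g t z) 0 + (t : ℝ) ^ c / 2 * ‖z - x t‖ ^ 2) X (x (t + 1))) :
    (∑ t ∈ Finset.Icc 1 T, max (g t (x t)) 0) ≤
      ((27 * F ^ 2 * (d : ℝ) ^ 2 + G ^ 2) / 4 + 3 * F * (d : ℝ) * D * (8 + 1 / ε)
        + 2 * D ^ 2) * (T : ℝ) ^ (1 - c / 2) := by
  have hD0 : 0 ≤ D := (norm_nonneg _).trans (hD xs hxs xs hxs)
  have hM : 0 ≤ 3 * F * (d : ℝ) := by positivity
  have hmem : ∀ t ∈ Finset.Icc 1 (T + 1), x t ∈ X := by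
    intro t ht
    obtain ⟨ht1, htT⟩ := Finset.mem_Icc.1 ht
    obtain _ | _ | s := t
    · omega
    · exact hx1
    · exact (hupd (s + 1) (Finset.mem_Icc.2 ⟨by omega, by omega⟩)).1
  set K := G ^ 2 / 8 + 4 * (3 * F * (d : ℝ) * D)
  have hstep : ∀ t ∈ Finset.Icc 1 T, max (g t (x t)) 0 ≤ K * (t : ℝ) ^ (-(c / 2))
      + 2 * ((t : ℝ) ^ (c / 2) * (‖xs - x t‖ ^ 2 - ‖xs - x (t + 1)‖ ^ 2)) := by
    intro t ht
    have ht1 : (1 : ℝ) ≤ t := by exact_mod_cast (Finset.mem_Icc.1 ht).1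
    have hsq : (t : ℝ) ^ c = ((t : ℝ) ^ (c / 2)) ^ 2 := by
      rw [← Real.rpow_natCast, ← Real.rpow_mul (by positivity)]
      norm_num
    have hwC : (t : ℝ) ^ (c / 2) ≤ lam t * γ t :=
      hγ t ht ▸ rpow_half_le_mul_rpow_add ht1 (by linarith) hε.le (hlam t ht)
    have hmin := (hupd t ht).2
    rw [hsq] at hmin
    rw [Real.rpow_neg (by positivity)]
    have hxt : x t ∈ X := hmem t (by simp only [Finset.mem_Icc] at ht ⊢; omega)
    exact max_zero_le_of_proxStep hxt (hupd t ht).1 hxs (hdiff t ht _ hxt) (hlip t ht) hM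
      (hg t ht) (hglip t ht) (hgxs t ht) (hD _ hxs _ (hupd t ht).1) (by positivity) hwC hmin
  have hdist : ∀ t ∈ Finset.Icc 1 (T + 1), 0 ≤ ‖xs - x t‖ ^ 2 ∧ ‖xs - x t‖ ^ 2 ≤ D ^ 2 :=
    fun t ht => ⟨by positivity, pow_le_pow_left₀ (norm_nonneg _) (hD _ hxs _ (hmem t ht)) 2⟩
  calc ∑ t ∈ Finset.Icc 1 T, max (g t (x t)) 0
      ≤ (2 * K + 2 * D ^ 2) * (T : ℝ) ^ (1 - c / 2) :=
        sum_le_of_le_rpow_neg_add_weighted_sub (by positivity) (by linarith) (by linarith) hT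
          hdist hstep
    _ ≤ _ := by
        gcongr
        have h27 : 0 ≤ 27 * F ^ 2 * (d : ℝ) ^ 2 / 4 := by positivity
        have hε' : 0 ≤ 3 * F * (d : ℝ) * D * (1 / ε) :=
          mul_nonneg (mul_nonneg hM hD0) (by positivity)
        linear_combination h27 + hε'

/-- Deterministic hard-constraint violation bound for time-varying
constraints (Theorem 2): with `λ_t ≥ t^c`, `γ_t = t^{c+ε}`, `α_t = t^c`,
`∑_{t=1}^T [g_t(x_t)]₊ ≤ ((27F²d² + G²)/4 + 3FdD(8 + 1/ε) + 2D²)·T^{1−c/2}`. -/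
theorem violation_bound_convex_time_varying
    {d : ℕ} (hd : 1 ≤ d)
    (X : Set (EuclideanSpace ℝ (Fin d)))
    (hne : X.Nonempty) (hcomp : IsCompact X) (hX : Convex ℝ X)
    (D : ℝ) (hD : ∀ x ∈ X, ∀ y ∈ X, ‖x - y‖ ≤ D)
    (F G : ℝ) (hF : 0 < F) (hG : 0 < G)
    (c ε : ℝ) (hc₁ : 1 / 2 ≤ c) (hc₂ : c < 1) (hε : 0 < ε)
    (T : ℕ) (hT : 1 ≤ T)
    (h : ℕ → EuclideanSpace ℝ (Fin d) → ℝ)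
    (hconv : ∀ t ∈ Finset.Icc 1 T, ConvexOn ℝ X (h t))
    (hdiff : ∀ t ∈ Finset.Icc 1 T, ∀ x ∈ X, DifferentiableAt ℝ (h t) x)
    (hlip : ∀ t ∈ Finset.Icc 1 T, ∀ x ∈ X, ∀ y ∈ X,
      |h t x - h t y| ≤ 3 * F * (d : ℝ) * ‖x - y‖)
    (g : ℕ → EuclideanSpace ℝ (Fin d) → ℝ)
    (hg : ∀ t ∈ Finset.Icc 1 T, ConvexOn ℝ X (g t))
    (hglip : ∀ t ∈ Finset.Icc 1 T, ∀ x ∈ X, ∀ y ∈ X, |g t x - g t y| ≤ G * ‖x - y‖)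
    (xs : EuclideanSpace ℝ (Fin d)) (hxs : xs ∈ X)
    (hgxs : ∀ t ∈ Finset.Icc 1 T, g t xs ≤ 0)
    (x : ℕ → EuclideanSpace ℝ (Fin d)) (hx1 : x 1 ∈ X)
    (lam γ : ℕ → ℝ)
    (hlam : ∀ t ∈ Finset.Icc 1 T, (t : ℝ) ^ c ≤ lam t)
    (hγ : ∀ t ∈ Finset.Icc 1 T, γ t = (t : ℝ) ^ (c + ε))
    (hupd : ∀ t ∈ Finset.Icc 1 T, x (t + 1) ∈ X ∧
      IsMinOn (fun z => h t (x t) + ⟪gradient (h t) (x t), z - x t⟫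
        + lam t * γ t * max (g t z) 0 + (t : ℝ) ^ c / 2 * ‖z - x t‖ ^ 2) X (x (t + 1))) :
    (∑ t ∈ Finset.Icc 1 T, max (g t (x t)) 0) ≤
      ((27 * F ^ 2 * (d : ℝ) ^ 2 + G ^ 2) / 4 + 3 * F * (d : ℝ) * D * (8 + 1 / ε)
        + 2 * D ^ 2) * (T : ℝ) ^ (1 - c / 2) :=
  violation_bound_convex_time_varying_general X D hD F G hF c ε hc₁ hc₂ hε T hT h hdiff hlip g hg
    hglip xs hxs hgxs x hx1 lam γ hlam hγ hupd
end

section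
/- Let X ⊆ ℝ^d be a nonempty compact convex set with ‖x − y‖₂ ≤ D for all x, y ∈ X, let F > 0, G > 0, σ > 0, d ≥ 1, c ∈ [1/2, 1), ε > 0, and let T be a positive integer. For each t = 1, …, T let h_t : ℝ^d → ℝ be differentiable, σ-strongly convex on X, and Lipschitz continuous with constant 3Fd on X, let g_t : ℝ^d → ℝ be convex and Lipschitz continuous with constant G on X, and suppose x* ∈ X satisfies g_t(x*) ≤ 0 for all t. Let x_1 ∈ X, and for each t let λ_t ≥ t^c, γ_t := t^{c+ε}, α_t := σ·t, and let x_{t+1} be the minimizer over X of x ↦ h_t(x_t) + ⟨∇h_t(x_t), x − x_t⟩ + λ_t γ_t·max{g_t(x), 0} + (α_t/2)‖x − x_t‖₂². Then ∑_{t=1}^{T} max{g_t(x_t), 0} ≤ (27F²d²/(4σ) + G²/4 + 3FdD(1 + 1/ε + 4/σ) + D²)·√(T·(1 + log T)). -/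
/-!
Comparing the proximal update with the feasible point `x*` through the three-point inequality
of the `σt`-strongly convex surrogate gives, with `K = 3Fd` and the potential
`C_t = σ(t-1)/2 ‖x_t - x*‖²`,
`t^(1+ε) [g_t(x_{t+1})]₊ + σt/2 ‖x_t - x_{t+1}‖² + C_{t+1} ≤ KD + K ‖x_t - x_{t+1}‖ + C_t`.
Dividing by `t^(1+ε)`, resp. by `σt/2`, and summing by parts against the decreasing weights
`t^-(1+ε)`, resp. `1/t`, bounds `∑ [g_t(x_{t+1})]₊` by a constant and `∑ ‖x_t - x_{t+1}‖²` by
`O(log T)`. The Lipschitz bound on `g_t` and Young's inequality with `β = √(T / (1 + log T))`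
move the bound from `x_{t+1}` to `x_t`.
-/

open RealInnerProductSpace Filter Topology Finset Real

section InnerProductSpace

variable {E : Type*} [NormedAddCommGroup E] [InnerProductSpace ℝ E] {s : Set E} {x y : E}

theorem strongConvexOn_mul_norm_sub_sq (hs : Convex ℝ s) (m : ℝ) (x₀ : E) :
    StrongConvexOn s m fun z ↦ m / 2 * ‖z - x₀‖ ^ 2 := by
  refine ⟨hs, fun x _ y _ a b _ _ hab ↦ le_of_eq ?_⟩
  obtain rfl : b = 1 - a := by linarith
  dsimp only
  rw [show a • x + (1 - a) • y - x₀ = a • (x - x₀) + (1 - a) • (y - x₀) by module,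
    show x - y = (x - x₀) - (y - x₀) by abel]
  simp only [← real_inner_self_eq_norm_sq, inner_add_left, inner_add_right, inner_sub_left,
    inner_sub_right, real_inner_smul_left, real_inner_smul_right, real_inner_comm (x - x₀),
    smul_eq_mul]
  ring

theorem StrongConvexOn.add_le_of_isMinOn {f : E → ℝ} {m : ℝ} (hf : StrongConvexOn s m f)
    (hx : x ∈ s) (hmin : IsMinOn f s x) (hy : y ∈ s) : f x + m / 2 * ‖y - x‖ ^ 2 ≤ f y := by
  have key : ∀ θ ∈ Set.Ioc (0 : ℝ) 1, f x + (1 - θ) * (m / 2 * ‖y - x‖ ^ 2) ≤ f y := by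
    rintro θ ⟨hθ₀, hθ₁⟩
    have hmem := hf.1 hy hx hθ₀.le (sub_nonneg.2 hθ₁) (add_sub_cancel θ 1)
    have hconv := hf.2 hy hx hθ₀.le (sub_nonneg.2 hθ₁) (add_sub_cancel θ 1)
    have hle : f x ≤ f (θ • y + (1 - θ) • x) := hmin hmem
    simp only [smul_eq_mul] at hconv
    nlinarith
  have hlim : Tendsto (fun θ : ℝ ↦ f x + (1 - θ) * (m / 2 * ‖y - x‖ ^ 2)) (𝓝[>] 0)
      (𝓝 (f x + (1 - 0) * (m / 2 * ‖y - x‖ ^ 2))) :=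
    (Continuous.tendsto (by fun_prop) 0).mono_left nhdsWithin_le_nhds
  rw [sub_zero, one_mul] at hlim
  exact le_of_tendsto hlim (eventually_of_mem (Ioc_mem_nhdsGT zero_lt_one) key)

theorem neg_mul_norm_le_inner_gradient [CompleteSpace E] {φ : E → ℝ} {K : ℝ}
    (hs : Convex ℝ s) (hx : x ∈ s) (hy : y ∈ s) (hφ : DifferentiableAt ℝ φ x)
    (hlip : ∀ z ∈ s, |φ z - φ x| ≤ K * ‖z - x‖) :
    -(K * ‖y - x‖) ≤ ⟪gradient φ x, y - x⟫ := by
  have hline : HasDerivAt (fun τ : ℝ ↦ x + τ • (y - x)) (y - x) 0 := by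
    simpa using ((hasDerivAt_id (0 : ℝ)).smul_const (y - x)).const_add x
  have hderiv : HasDerivAt (fun τ : ℝ ↦ φ (x + τ • (y - x))) ⟪gradient φ x, y - x⟫ 0 := by
    have hφ' : HasGradientAt φ (gradient φ x) (x + (0 : ℝ) • (y - x)) := by
      simpa using hφ.hasGradientAt
    simpa [Function.comp_def] using hφ'.hasFDerivAt.comp_hasDerivAt 0 hline
  have hslope : Tendsto (slope (fun τ : ℝ ↦ φ (x + τ • (y - x))) 0) (𝓝[>] 0)
      (𝓝 ⟪gradient φ x, y - x⟫) :=
    (hasDerivAt_iff_tendsto_slope.1 hderiv).mono_left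
      (nhdsWithin_mono _ fun _ hτ ↦ ne_of_gt hτ)
  refine ge_of_tendsto hslope (eventually_of_mem (Ioc_mem_nhdsGT zero_lt_one) ?_)
  rintro τ ⟨hτ₀, hτ₁⟩
  have hmem : x + τ • (y - x) ∈ s := by
    simpa [AffineMap.lineMap_apply_module', add_comm] using
      hs.lineMap_mem hx hy ⟨hτ₀.le, hτ₁⟩
  have hbound := hlip _ hmem
  rw [add_sub_cancel_left, norm_smul, Real.norm_of_nonneg hτ₀.le] at hbound
  rw [slope_def_field, sub_zero, zero_smul, add_zero, le_div_iff₀ hτ₀]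
  linarith [neg_abs_le (φ (x + τ • (y - x)) - φ x)]

theorem linearized_prox_step_le [CompleteSpace E] {X : Set E} {h g : E → ℝ} {y m x₀ : E}
    {K σ α L : ℝ} (hX : Convex ℝ X) (hy : y ∈ X) (hm : m ∈ X) (hx₀ : x₀ ∈ X)
    (hdiff : DifferentiableAt ℝ h y)
    (hsc : h x₀ ≥ h y + ⟪gradient h y, x₀ - y⟫ + σ / 2 * ‖x₀ - y‖ ^ 2)
    (hlip : ∀ z ∈ X, |h z - h y| ≤ K * ‖z - y‖)
    (hg : ConvexOn ℝ X g) (hgx₀ : g x₀ ≤ 0) (hL : 0 ≤ L)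
    (hmin : IsMinOn (fun z ↦ h y + ⟪gradient h y, z - y⟫ + L * max (g z) 0
      + α / 2 * ‖z - y‖ ^ 2) X m) :
    L * max (g m) 0 + α / 2 * ‖y - m‖ ^ 2 + α / 2 * ‖m - x₀‖ ^ 2 ≤
      K * ‖x₀ - y‖ + K * ‖y - m‖ + (α - σ) / 2 * ‖y - x₀‖ ^ 2 := by
  have hlin : ConvexOn ℝ X fun z ↦ h y + ⟪gradient h y, z - y⟫ :=
    ⟨hX, fun p _ q _ a b _ _ hab ↦ le_of_eq (by
      simp only [inner_sub_right, inner_add_right, real_inner_smul_right, smul_eq_mul]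
      linear_combination (⟪gradient h y, y⟫ - h y) * hab)⟩
  have hpen : ConvexOn ℝ X fun z ↦ L * max (g z) 0 := (hg.sup (convexOn_const 0 hX)).smul hL
  have hobj : StrongConvexOn X α fun z ↦ h y + ⟪gradient h y, z - y⟫ + L * max (g z) 0
      + α / 2 * ‖z - y‖ ^ 2 :=
    ((strongConvexOn_zero.2 (hlin.add hpen)).add
      (strongConvexOn_mul_norm_sub_sq hX α y)).mono fun r ↦ by simp
  have hthree := hobj.add_le_of_isMinOn hm hmin hx₀
  have hlower := neg_mul_norm_le_inner_gradient hX hy hm hdiff hlip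
  have hupper : h x₀ - h y ≤ K * ‖x₀ - y‖ := (le_abs_self _).trans (hlip x₀ hx₀)
  rw [max_eq_right hgx₀, norm_sub_rev m y, norm_sub_rev x₀ m] at hthree
  rw [norm_sub_rev m y] at hlower
  rw [norm_sub_rev y x₀]
  linarith

end InnerProductSpace

theorem sub_mul_inv_rpow_one_add_le {ε A B : ℝ} (hε : 0 < ε) (hA : 0 < A) (hB : 0 < B) :
    (B - A) * (B ^ (1 + ε))⁻¹ ≤ (A ^ ε)⁻¹ / ε - (B ^ ε)⁻¹ / ε := by
  have hlog : 1 - A / B ≤ log (B / A) := by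
    simpa only [inv_div] using one_sub_inv_le_log_of_pos (div_pos hB hA)
  have hexp : 1 + ε * (1 - A / B) ≤ (B / A) ^ ε := by
    rw [rpow_def_of_pos (div_pos hB hA)]
    nlinarith [add_one_le_exp (log (B / A) * ε)]
  have hAB : (A ^ ε)⁻¹ = (B ^ ε)⁻¹ * (B / A) ^ ε := by
    rw [div_rpow hB.le hA.le]
    field_simp
  have hBε : 0 < (B ^ ε)⁻¹ := by positivity
  rw [← sub_div, le_div_iff₀ hε, hAB, rpow_add hB, rpow_one, mul_inv]
  have : (B - A) * (B⁻¹ * (B ^ ε)⁻¹) * ε = (B ^ ε)⁻¹ * (ε * (1 - A / B)) := by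
    field_simp
  rw [this]
  nlinarith

theorem sum_Icc_inv_rpow_one_add_le {ε : ℝ} (hε : 0 < ε) (T : ℕ) :
    ∑ t ∈ Icc 1 T, ((t : ℝ) ^ (1 + ε))⁻¹ ≤ 1 + 1 / ε := by
  suffices h : ∀ n : ℕ, 1 ≤ n →
      ∑ t ∈ Icc 1 n, ((t : ℝ) ^ (1 + ε))⁻¹ + ((n : ℝ) ^ ε)⁻¹ / ε ≤ 1 + 1 / ε by
    rcases Nat.eq_zero_or_pos T with rfl | hT
    · simp only [Icc_eq_empty_of_lt zero_lt_one, sum_empty]; positivity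
    · have : 0 ≤ ((T : ℝ) ^ ε)⁻¹ / ε := by positivity
      linarith [h T hT]
  intro n hn
  induction n, hn using Nat.le_induction with
  | base => simp
  | succ n hn ih =>
    rw [sum_Icc_succ_top (by omega)]
    have hstep := sub_mul_inv_rpow_one_add_le hε (A := n) (B := n + 1)
      (by exact_mod_cast hn) (by positivity)
    rw [add_sub_cancel_left, one_mul] at hstep
    push_cast
    linarith

theorem sum_Icc_inv_sq_le (T : ℕ) : ∑ t ∈ Icc 1 T, ((t : ℝ) ^ 2)⁻¹ ≤ 2 - 1 / T := by
  rcases Nat.eq_zero_or_pos T with rfl | hT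
  · norm_num
  rw [Icc_eq_cons_Ioc hT, sum_cons]
  have := sum_Ioc_inv_sq_le_sub (α := ℝ) one_ne_zero hT
  simp only [Nat.cast_one, one_pow, inv_one] at this ⊢
  linarith [one_div (T : ℝ)]

theorem sum_Icc_sub_mul_nonpos {C w : ℕ → ℝ} {T : ℕ} (hC : ∀ t ∈ Icc 1 (T + 1), 0 ≤ C t)
    (hC₁ : C 1 = 0) (hw : AntitoneOn w (Set.Icc 1 T)) (hwT : 0 ≤ w T) :
    ∑ t ∈ Icc 1 T, (C t - C (t + 1)) * w t ≤ 0 := by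
  suffices h : ∀ n ≤ T, ∑ t ∈ Icc 1 n, (C t - C (t + 1)) * w t ≤ -(C (n + 1) * w n) by
    have := mul_nonneg (hC (T + 1) (by simp)) hwT
    linarith [h T le_rfl]
  intro n hn
  induction n with
  | zero => simp [hC₁]
  | succ n ih =>
    rw [sum_Icc_succ_top (by omega)]
    have hmono : C (n + 1) * w (n + 1) ≤ C (n + 1) * w n := by
      rcases Nat.eq_zero_or_pos n with rfl | hn₀
      · simp [hC₁]
      · exact mul_le_mul_of_nonneg_left
          (hw ⟨hn₀, by omega⟩ ⟨by omega, hn⟩ (Nat.le_succ n)) (hC _ (by simp; omega))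
    linarith [ih (by omega)]

theorem le_of_penalized_step {t ε σ K D a δ c c' : ℝ} (ht : 1 ≤ t) (hε : 0 ≤ ε) (hσ : 0 < σ)
    (hstep : t ^ (1 + ε) * a + σ * t / 2 * δ ^ 2 + c' ≤ K * D + K * δ + c) :
    a ≤ K * D * (t ^ (1 + ε))⁻¹ + (c - c') * (t ^ (1 + ε))⁻¹ + K ^ 2 / (2 * σ) * (t ^ 2)⁻¹ := by
  have ht₀ : 0 < t := by linarith
  have hamgm : K * δ - σ * t / 2 * δ ^ 2 ≤ K ^ 2 / (2 * σ) * t⁻¹ := by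
    have hsq : K ^ 2 / (2 * σ) * t⁻¹ - (K * δ - σ * t / 2 * δ ^ 2)
        = (K - σ * t * δ) ^ 2 / (2 * σ * t) := by
      field_simp
      ring
    have : 0 ≤ (K - σ * t * δ) ^ 2 / (2 * σ * t) := by positivity
    linarith
  set u := t ^ (1 + ε)
  have hu : t ≤ u := self_le_rpow_of_one_le ht (by linarith)
  have hu₀ : 0 < u := by positivity
  have hua : u * a ≤ K * D + (c - c') + K ^ 2 / (2 * σ) * t⁻¹ := by linarith
  calc a = u⁻¹ * (u * a) := by field_simp
    _ ≤ u⁻¹ * (K * D + (c - c') + K ^ 2 / (2 * σ) * t⁻¹) := by gcongr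
    _ = K * D * u⁻¹ + (c - c') * u⁻¹ + K ^ 2 / (2 * σ) * (t * u)⁻¹ := by
      rw [mul_inv]; ring
    _ ≤ _ := by
      gcongr
      rw [sq]
      gcongr

section PenalizedStep

variable {K D σ ε : ℝ} {T : ℕ} {a δ C : ℕ → ℝ}

theorem sum_le_of_penalized_step (hσ : 0 < σ) (hε : 0 < ε) (hKD : 0 ≤ K * D)
    (hC : ∀ t ∈ Icc 1 (T + 1), 0 ≤ C t) (hC₁ : C 1 = 0)
    (hstep : ∀ t ∈ Icc 1 T, (t : ℝ) ^ (1 + ε) * a t + σ * t / 2 * δ t ^ 2 + C (t + 1) ≤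
      K * D + K * δ t + C t) :
    ∑ t ∈ Icc 1 T, a t ≤ K * D * (1 + 1 / ε) + K ^ 2 / (2 * σ) * (2 - 1 / T) := by
  have hterm : ∀ t ∈ Icc 1 T, a t ≤ K * D * ((t : ℝ) ^ (1 + ε))⁻¹
      + (C t - C (t + 1)) * ((t : ℝ) ^ (1 + ε))⁻¹ + K ^ 2 / (2 * σ) * ((t : ℝ) ^ 2)⁻¹ :=
    fun t ht ↦ le_of_penalized_step (by exact_mod_cast (mem_Icc.1 ht).1) hε.le hσ (hstep t ht)
  calc ∑ t ∈ Icc 1 T, a t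
      ≤ ∑ t ∈ Icc 1 T, (K * D * ((t : ℝ) ^ (1 + ε))⁻¹
        + (C t - C (t + 1)) * ((t : ℝ) ^ (1 + ε))⁻¹ + K ^ 2 / (2 * σ) * ((t : ℝ) ^ 2)⁻¹) :=
        sum_le_sum hterm
    _ = K * D * ∑ t ∈ Icc 1 T, ((t : ℝ) ^ (1 + ε))⁻¹
        + ∑ t ∈ Icc 1 T, (C t - C (t + 1)) * ((t : ℝ) ^ (1 + ε))⁻¹
        + K ^ 2 / (2 * σ) * ∑ t ∈ Icc 1 T, ((t : ℝ) ^ 2)⁻¹ := by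
      rw [sum_add_distrib, sum_add_distrib, mul_sum, mul_sum]
    _ ≤ K * D * (1 + 1 / ε) + 0 + K ^ 2 / (2 * σ) * (2 - 1 / T) := by
      gcongr
      · exact sum_Icc_inv_rpow_one_add_le hε T
      · refine sum_Icc_sub_mul_nonpos hC hC₁ (fun i hi j _ hij ↦ ?_) (by positivity)
        have hi₁ : (1 : ℝ) ≤ i := by exact_mod_cast hi.1
        gcongr
      · exact sum_Icc_inv_sq_le T
    _ = _ := by rw [add_zero]

theorem sum_sq_le_of_penalized_step (hσ : 0 < σ) (hK : 0 ≤ K) (hD : 0 ≤ D)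
    (hC : ∀ t ∈ Icc 1 (T + 1), 0 ≤ C t) (hC₁ : C 1 = 0) (ha : ∀ t ∈ Icc 1 T, 0 ≤ a t)
    (hδ : ∀ t ∈ Icc 1 T, δ t ≤ D)
    (hstep : ∀ t ∈ Icc 1 T, (t : ℝ) ^ (1 + ε) * a t + σ * t / 2 * δ t ^ 2 + C (t + 1) ≤
      K * D + K * δ t + C t) :
    ∑ t ∈ Icc 1 T, δ t ^ 2 ≤ 4 * K * D / σ * (1 + log T) := by
  have hterm : ∀ t ∈ Icc 1 T,
      δ t ^ 2 ≤ 4 * K * D / σ * (t : ℝ)⁻¹ + 2 / σ * ((C t - C (t + 1)) * (t : ℝ)⁻¹) := by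
    intro t ht
    have ht₀ : (0 : ℝ) < t := by exact_mod_cast (mem_Icc.1 ht).1
    have hpen : 0 ≤ (t : ℝ) ^ (1 + ε) * a t := mul_nonneg (by positivity) (ha t ht)
    have hKδ : K * δ t ≤ K * D := mul_le_mul_of_nonneg_left (hδ t ht) hK
    have hdesc : σ * t / 2 * δ t ^ 2 ≤ 2 * (K * D) + (C t - C (t + 1)) := by
      linarith [hstep t ht]
    calc δ t ^ 2 = 2 / (σ * t) * (σ * t / 2 * δ t ^ 2) := by field_simp
      _ ≤ 2 / (σ * t) * (2 * (K * D) + (C t - C (t + 1))) := by gcongr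
      _ = _ := by field_simp; ring
  calc ∑ t ∈ Icc 1 T, δ t ^ 2
      ≤ ∑ t ∈ Icc 1 T, (4 * K * D / σ * (t : ℝ)⁻¹ + 2 / σ * ((C t - C (t + 1)) * (t : ℝ)⁻¹)) :=
        sum_le_sum hterm
    _ = 4 * K * D / σ * ∑ t ∈ Icc 1 T, (t : ℝ)⁻¹
        + 2 / σ * ∑ t ∈ Icc 1 T, (C t - C (t + 1)) * (t : ℝ)⁻¹ := by
      rw [sum_add_distrib, mul_sum, mul_sum]
    _ ≤ 4 * K * D / σ * (1 + log T) + 2 / σ * 0 := by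
      gcongr
      · simpa only [harmonic_eq_sum_Icc, Rat.cast_sum, Rat.cast_inv, Rat.cast_natCast] using
          harmonic_le_one_add_log T
      · refine sum_Icc_sub_mul_nonpos hC hC₁ (fun i hi j _ hij ↦ ?_) (by positivity)
        have hi₁ : (1 : ℝ) ≤ i := by exact_mod_cast hi.1
        gcongr
    _ = _ := by rw [mul_zero, add_zero]

end PenalizedStep

theorem sum_max_zero_le_of_abs_sub_le {f g δ : ℕ → ℝ} {G β : ℝ} {T : ℕ} (hβ : 0 < β)
    (hfg : ∀ t ∈ Icc 1 T, |f t - g t| ≤ G * δ t) :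
    ∑ t ∈ Icc 1 T, max (f t) 0 ≤
      ∑ t ∈ Icc 1 T, max (g t) 0 + T * (G ^ 2 / (4 * β)) + β * ∑ t ∈ Icc 1 T, δ t ^ 2 := by
  have hterm : ∀ t ∈ Icc 1 T, max (f t) 0 ≤ max (g t) 0 + G ^ 2 / (4 * β) + β * δ t ^ 2 := by
    intro t ht
    have hmax := (le_abs_self _).trans ((abs_max_sub_max_le_abs (f t) (g t) 0).trans (hfg t ht))
    have hyoung : G ^ 2 / (4 * β) + β * δ t ^ 2 - G * δ t = (G - 2 * β * δ t) ^ 2 / (4 * β) := by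
      field_simp
      ring
    have : 0 ≤ (G - 2 * β * δ t) ^ 2 / (4 * β) := by positivity
    linarith
  calc ∑ t ∈ Icc 1 T, max (f t) 0
      ≤ ∑ t ∈ Icc 1 T, (max (g t) 0 + G ^ 2 / (4 * β) + β * δ t ^ 2) := sum_le_sum hterm
    _ = _ := by
      rw [sum_add_distrib, sum_add_distrib, sum_const, Nat.card_Icc, add_tsub_cancel_right,
        nsmul_eq_mul, mul_sum]

theorem one_le_sqrt_mul_one_add_log {T : ℕ} (hT : 1 ≤ T) : 1 ≤ √(T * (1 + log T)) := by
  have hT' : (1 : ℝ) ≤ T := by exact_mod_cast hT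
  rw [one_le_sqrt]
  nlinarith [log_nonneg hT']

theorem two_sub_inv_le_sqrt_mul_one_add_log {T : ℕ} (hT : 1 ≤ T) :
    2 - 1 / T ≤ 3 / 2 * √(T * (1 + log T)) := by
  have hT' : (1 : ℝ) ≤ T := by exact_mod_cast hT
  rcases eq_or_lt_of_le hT with rfl | hT₂
  · norm_num
  · have hT₂' : (2 : ℝ) ≤ T := by exact_mod_cast hT₂
    have hS := one_le_sqrt_mul_one_add_log hT
    have hS2 := sq_sqrt (by positivity : (0 : ℝ) ≤ T * (1 + log T))
    have hTS : (T : ℝ) ≤ T * (1 + log T) := by nlinarith [log_nonneg hT']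
    have hinv : 0 < 1 / (T : ℝ) := by positivity
    nlinarith

theorem sum_max_zero_le_of_shifted_bounds {K D G σ ε : ℝ} {T : ℕ} {v w δ : ℕ → ℝ}
    (hT : 1 ≤ T) (hσ : 0 < σ) (hε : 0 < ε) (hK : 0 ≤ K) (hD : 0 ≤ D)
    (hw : ∑ t ∈ Icc 1 T, max (w t) 0 ≤ K * D * (1 + 1 / ε) + K ^ 2 / (2 * σ) * (2 - 1 / T))
    (hδ : ∑ t ∈ Icc 1 T, δ t ^ 2 ≤ 4 * K * D / σ * (1 + log T))
    (hvw : ∀ t ∈ Icc 1 T, |v t - w t| ≤ G * δ t) :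
    ∑ t ∈ Icc 1 T, max (v t) 0 ≤
      (3 * K ^ 2 / (4 * σ) + G ^ 2 / 4 + K * D * (1 + 1 / ε + 4 / σ)) *
        √(T * (1 + log T)) := by
  set L := 1 + log T
  set S := √(T * L)
  have hL : 1 ≤ L := le_add_of_nonneg_right (log_nonneg (by exact_mod_cast hT))
  have hS : 1 ≤ S := one_le_sqrt_mul_one_add_log hT
  have hS2 : S ^ 2 = T * L := sq_sqrt (by positivity)
  -- Young's parameter `β = S / L = √(T / L)`.
  have hβ : 0 < S / L := by positivity
  have hTβ : T * (G ^ 2 / (4 * (S / L))) = G ^ 2 / 4 * S := by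
    field_simp
    linear_combination (-G ^ 2) * hS2
  have hβL : S / L * (4 * K * D / σ * L) = 4 * K * D / σ * S := by field_simp
  have hlog := two_sub_inv_le_sqrt_mul_one_add_log hT
  calc ∑ t ∈ Icc 1 T, max (v t) 0
      ≤ ∑ t ∈ Icc 1 T, max (w t) 0 + T * (G ^ 2 / (4 * (S / L)))
        + S / L * ∑ t ∈ Icc 1 T, δ t ^ 2 := sum_max_zero_le_of_abs_sub_le hβ hvw
    _ ≤ K * D * (1 + 1 / ε) + K ^ 2 / (2 * σ) * (3 / 2 * S) + G ^ 2 / 4 * S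
        + 4 * K * D / σ * S := by
      rw [← hTβ, ← hβL]
      gcongr
      exact hw.trans (by gcongr)
    _ ≤ _ := by
      have : K * D * (1 + 1 / ε) ≤ K * D * (1 + 1 / ε) * S :=
        le_mul_of_one_le_right (by positivity) hS
      have hexpand : (3 * K ^ 2 / (4 * σ) + G ^ 2 / 4 + K * D * (1 + 1 / ε + 4 / σ)) * S
          = K * D * (1 + 1 / ε) * S + K ^ 2 / (2 * σ) * (3 / 2 * S) + G ^ 2 / 4 * S
            + 4 * K * D / σ * S := by ring
      linarith

theorem sum_max_zero_le_of_penalized_step {K D G σ ε : ℝ} {T : ℕ} {v w δ P : ℕ → ℝ}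
    (hT : 1 ≤ T) (hσ : 0 < σ) (hε : 0 < ε) (hK : 0 ≤ K) (hD : 0 ≤ D) (hP : ∀ t, 0 ≤ P t)
    (hδ : ∀ t ∈ Icc 1 T, δ t ≤ D)
    (hstep : ∀ t ∈ Icc 1 T, (t : ℝ) ^ (1 + ε) * max (w t) 0 + σ * t / 2 * δ t ^ 2
      + σ * t / 2 * P (t + 1) ≤ K * D + K * δ t + σ * (t - 1) / 2 * P t)
    (hvw : ∀ t ∈ Icc 1 T, |v t - w t| ≤ G * δ t) :
    ∑ t ∈ Icc 1 T, max (v t) 0 ≤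
      (3 * K ^ 2 / (4 * σ) + G ^ 2 / 4 + K * D * (1 + 1 / ε + 4 / σ)) *
        √(T * (1 + log T)) := by
  set C : ℕ → ℝ := fun t ↦ σ * ((t : ℝ) - 1) / 2 * P t
  have hC : ∀ t ∈ Icc 1 (T + 1), 0 ≤ C t := fun t ht ↦ by
    have : 0 ≤ (t : ℝ) - 1 := sub_nonneg.2 (by exact_mod_cast (mem_Icc.1 ht).1)
    have := hP t
    positivity
  have hC₁ : C 1 = 0 := by simp [C]
  have hstepC : ∀ t ∈ Icc 1 T, (t : ℝ) ^ (1 + ε) * max (w t) 0 + σ * t / 2 * δ t ^ 2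
      + C (t + 1) ≤ K * D + K * δ t + C t := fun t ht ↦ by
    simp only [C]
    push_cast
    linarith [hstep t ht]
  exact sum_max_zero_le_of_shifted_bounds hT hσ hε hK hD
    (sum_le_of_penalized_step hσ hε (mul_nonneg hK hD) hC hC₁ hstepC)
    (sum_sq_le_of_penalized_step hσ hK hD hC hC₁ (fun _ _ ↦ le_max_right _ _) hδ hstepC) hvw

theorem rpow_one_add_le_mul_rpow {t c ε lam : ℝ} (ht : 1 ≤ t) (hc : 1 / 2 ≤ c)
    (hlam : t ^ c ≤ lam) : t ^ (1 + ε) ≤ lam * t ^ (c + ε) :=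
  calc t ^ (1 + ε) ≤ t ^ (c + (c + ε)) := rpow_le_rpow_of_exponent_le ht (by linarith)
    _ = t ^ c * t ^ (c + ε) := rpow_add (by linarith) _ _
    _ ≤ lam * t ^ (c + ε) := by gcongr

theorem violation_bound_strongly_convex_time_varying_general
    {d : ℕ}
    (X : Set (EuclideanSpace ℝ (Fin d)))
    (hX : Convex ℝ X)
    (D : ℝ) (hD : ∀ x ∈ X, ∀ y ∈ X, ‖x - y‖ ≤ D)
    (F G σ : ℝ) (hF : 0 < F) (hσ : 0 < σ)
    (c ε : ℝ) (hc₁ : 1 / 2 ≤ c) (hε : 0 < ε)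
    (T : ℕ) (hT : 1 ≤ T)
    (h : ℕ → EuclideanSpace ℝ (Fin d) → ℝ)
    (hdiff : ∀ t ∈ Finset.Icc 1 T, ∀ x ∈ X, DifferentiableAt ℝ (h t) x)
    (hsc : ∀ t ∈ Finset.Icc 1 T, ∀ x ∈ X, ∀ y ∈ X,
      h t x ≥ h t y + ⟪gradient (h t) y, x - y⟫ + σ / 2 * ‖x - y‖ ^ 2)
    (hlip : ∀ t ∈ Finset.Icc 1 T, ∀ x ∈ X, ∀ y ∈ X,
      |h t x - h t y| ≤ 3 * F * (d : ℝ) * ‖x - y‖)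
    (g : ℕ → EuclideanSpace ℝ (Fin d) → ℝ)
    (hg : ∀ t ∈ Finset.Icc 1 T, ConvexOn ℝ X (g t))
    (hglip : ∀ t ∈ Finset.Icc 1 T, ∀ x ∈ X, ∀ y ∈ X, |g t x - g t y| ≤ G * ‖x - y‖)
    (xs : EuclideanSpace ℝ (Fin d)) (hxs : xs ∈ X)
    (hgxs : ∀ t ∈ Finset.Icc 1 T, g t xs ≤ 0)
    (x : ℕ → EuclideanSpace ℝ (Fin d)) (hx1 : x 1 ∈ X)
    (lam γ : ℕ → ℝ)
    (hlam : ∀ t ∈ Finset.Icc 1 T, (t : ℝ) ^ c ≤ lam t)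
    (hγ : ∀ t ∈ Finset.Icc 1 T, γ t = (t : ℝ) ^ (c + ε))
    (hupd : ∀ t ∈ Finset.Icc 1 T, x (t + 1) ∈ X ∧
      IsMinOn (fun z => h t (x t) + ⟪gradient (h t) (x t), z - x t⟫
        + lam t * γ t * max (g t z) 0 + σ * (t : ℝ) / 2 * ‖z - x t‖ ^ 2) X (x (t + 1))) :
    (∑ t ∈ Finset.Icc 1 T, max (g t (x t)) 0) ≤
      (27 * F ^ 2 * (d : ℝ) ^ 2 / (4 * σ) + G ^ 2 / 4
        + 3 * F * (d : ℝ) * D * (1 + 1 / ε + 4 / σ) + D ^ 2) *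
        Real.sqrt ((T : ℝ) * (1 + Real.log T)) := by
  have hK : 0 ≤ 3 * F * (d : ℝ) := by positivity
  have hD₀ : 0 ≤ D := (norm_nonneg _).trans (hD xs hxs xs hxs)
  have hxX : ∀ t ∈ Icc 1 T, x t ∈ X := by
    rintro (_ | _ | t) ht
    · simp at ht
    · exact hx1
    · exact (hupd (t + 1) (by simp at ht ⊢; omega)).1
  have hstep : ∀ t ∈ Icc 1 T, (t : ℝ) ^ (1 + ε) * max (g t (x (t + 1))) 0
      + σ * t / 2 * ‖x t - x (t + 1)‖ ^ 2 + σ * t / 2 * ‖x (t + 1) - xs‖ ^ 2 ≤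
      3 * F * d * D + 3 * F * d * ‖x t - x (t + 1)‖ + σ * (t - 1) / 2 * ‖x t - xs‖ ^ 2 := by
    intro t ht
    have hpen := hγ t ht ▸ rpow_one_add_le_mul_rpow (ε := ε)
      (by exact_mod_cast (mem_Icc.1 ht).1) hc₁ (hlam t ht)
    have hprox := linearized_prox_step_le hX (hxX t ht) (hupd t ht).1 hxs
      (hdiff t ht _ (hxX t ht)) (hsc t ht xs hxs _ (hxX t ht))
      (fun z hz ↦ hlip t ht z hz _ (hxX t ht)) (hg t ht) (hgxs t ht)
      ((rpow_nonneg (by positivity) _).trans hpen) (hupd t ht).2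
    have := mul_le_mul_of_nonneg_right hpen (le_max_right (g t (x (t + 1))) 0)
    have := mul_le_mul_of_nonneg_left (hD xs hxs _ (hxX t ht)) hK
    linarith
  refine (sum_max_zero_le_of_penalized_step (v := fun t ↦ g t (x t))
    (P := fun t ↦ ‖x t - xs‖ ^ 2) hT hσ hε hK hD₀ (fun _ ↦ sq_nonneg _)
    (fun t ht ↦ hD _ (hxX t ht) _ (hupd t ht).1) hstep
    (fun t ht ↦ hglip t ht _ (hxX t ht) _ (hupd t ht).1)).trans ?_
  have hcoef : 3 * (3 * F * (d : ℝ)) ^ 2 / (4 * σ) = 27 * F ^ 2 * (d : ℝ) ^ 2 / (4 * σ) := by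
    ring
  gcongr ?_ * _
  linarith [sq_nonneg D]

/-- Deterministic hard-constraint violation bound for strongly convex
losses and time-varying constraints (Theorem 4): with `λ_t ≥ t^c`, `γ_t = t^{c+ε}`,
`α_t = σt`, `∑_{t=1}^T [g_t(x_t)]₊ ≤ (27F²d²/(4σ) + G²/4 + 3FdD(1 + 1/ε + 4/σ) + D²)·√(T(1 + log T))`. -/
theorem violation_bound_strongly_convex_time_varying
    {d : ℕ} (hd : 1 ≤ d)
    (X : Set (EuclideanSpace ℝ (Fin d)))
    (hne : X.Nonempty) (hcomp : IsCompact X) (hX : Convex ℝ X)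
    (D : ℝ) (hD : ∀ x ∈ X, ∀ y ∈ X, ‖x - y‖ ≤ D)
    (F G σ : ℝ) (hF : 0 < F) (hG : 0 < G) (hσ : 0 < σ)
    (c ε : ℝ) (hc₁ : 1 / 2 ≤ c) (hc₂ : c < 1) (hε : 0 < ε)
    (T : ℕ) (hT : 1 ≤ T)
    (h : ℕ → EuclideanSpace ℝ (Fin d) → ℝ)
    (hdiff : ∀ t ∈ Finset.Icc 1 T, ∀ x ∈ X, DifferentiableAt ℝ (h t) x)
    (hsc : ∀ t ∈ Finset.Icc 1 T, ∀ x ∈ X, ∀ y ∈ X,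
      h t x ≥ h t y + ⟪gradient (h t) y, x - y⟫ + σ / 2 * ‖x - y‖ ^ 2)
    (hlip : ∀ t ∈ Finset.Icc 1 T, ∀ x ∈ X, ∀ y ∈ X,
      |h t x - h t y| ≤ 3 * F * (d : ℝ) * ‖x - y‖)
    (g : ℕ → EuclideanSpace ℝ (Fin d) → ℝ)
    (hg : ∀ t ∈ Finset.Icc 1 T, ConvexOn ℝ X (g t))
    (hglip : ∀ t ∈ Finset.Icc 1 T, ∀ x ∈ X, ∀ y ∈ X, |g t x - g t y| ≤ G * ‖x - y‖)
    (xs : EuclideanSpace ℝ (Fin d)) (hxs : xs ∈ X)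
    (hgxs : ∀ t ∈ Finset.Icc 1 T, g t xs ≤ 0)
    (x : ℕ → EuclideanSpace ℝ (Fin d)) (hx1 : x 1 ∈ X)
    (lam γ : ℕ → ℝ)
    (hlam : ∀ t ∈ Finset.Icc 1 T, (t : ℝ) ^ c ≤ lam t)
    (hγ : ∀ t ∈ Finset.Icc 1 T, γ t = (t : ℝ) ^ (c + ε))
    (hupd : ∀ t ∈ Finset.Icc 1 T, x (t + 1) ∈ X ∧
      IsMinOn (fun z => h t (x t) + ⟪gradient (h t) (x t), z - x t⟫
        + lam t * γ t * max (g t z) 0 + σ * (t : ℝ) / 2 * ‖z - x t‖ ^ 2) X (x (t + 1))) :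
    (∑ t ∈ Finset.Icc 1 T, max (g t (x t)) 0) ≤
      (27 * F ^ 2 * (d : ℝ) ^ 2 / (4 * σ) + G ^ 2 / 4
        + 3 * F * (d : ℝ) * D * (1 + 1 / ε + 4 / σ) + D ^ 2) *
        Real.sqrt ((T : ℝ) * (1 + Real.log T)) :=
  violation_bound_strongly_convex_time_varying_general X hX D hD F G σ hF hσ c ε hc₁ hε T hT h hdiff
    hsc hlip g hg hglip xs hxs hgxs x hx1 lam γ hlam hγ hupd
end
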